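/- arXiv:2402.19324 — 6 statements merged into one kernel-verified Lean document; each statement's English description precedes it below -/
import Mathlib

section
/- Let A be a finite alphabet, let p1, p2 ≥ 2 be integers, and let Ω1, Ω2 ⊆ A^ℕ be subshifts. If Ω1 = A^ℕ is the full shift, then h(X_{Ω1}^{p1} ⊗ X_{Ω2}^{p2}) = ((p2−1)²/p2²) · Σ_{i=1}^∞ log|P([1,i], Ω2)| / p2^{i−1}; symmetrically, if Ω2 = A^ℕ is the full shift, then h(X_{Ω1}^{p1} ⊗ X_{Ω2}^{p2}) = ((p1−1)²/p1²) · Σ_{i=1}^∞ log|P([1,i], Ω1)| / p1^{i−1}. (These series equal the one-dimensional entropies h(X_{Ω2}^{p2}) and h(X_{Ω1}^{p1}) respectively.) -/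
open Filter Real

/-- The set of patterns of `Z` on the finite window `Λ`: restrictions to `Λ`
of configurations in `Z`, counted by `Nat.card`. -/
noncomputable def pattCount {G A : Type*} (Λ : Set G) (Z : Set (G → A)) : ℕ :=
  Nat.card (Λ.restrict '' Z)

/-- A subshift of `A^ℕ`: nonempty, closed, shift-invariant. -/
def IsSubshift {A : Type*} [TopologicalSpace A] (Ω : Set (ℕ → A)) : Prop :=
  Ω.Nonempty ∧ IsClosed Ω ∧ ∀ x ∈ Ω, (fun n => x (n + 1)) ∈ Ω

/-- Multiplicative subshift `X_Ω^p`.  Coordinates are 0-indexed: the Lean index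
`n` represents the paper coordinate `n + 1`, so the paper ray `(x_{i·p^l})_{l≥0}`
(for `i ≥ 1`, `p ∤ i`) is `fun l => x (i * p ^ l - 1)`. -/
def mulSubshift {A : Type*} (p : ℕ) (Ω : Set (ℕ → A)) : Set (ℕ → A) :=
  {x | ∀ i : ℕ, 1 ≤ i → ¬ p ∣ i → (fun l => x (i * p ^ l - 1)) ∈ Ω}

/-- Axial product on `ℕ²`: every row belongs to `X`, every column to `Y`. -/
def axial2 {A : Type*} (X Y : Set (ℕ → A)) : Set (ℕ × ℕ → A) :=
  {x | (∀ j, (fun i => x (i, j)) ∈ X) ∧ (∀ i, (fun j => x (i, j)) ∈ Y)}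

/-- The box `[1,m] × [1,n]` of the paper, in 0-indexed coordinates. -/
def box2 (m n : ℕ) : Set (ℕ × ℕ) := Set.Iio m ×ˢ Set.Iio n

/-!
If `Ω₁` is the full shift, the row constraints are void, so a pattern of the axial product on
`[1,m] × [1,n]` is just `m` independent patterns of `X_{Ω₂}^{p₂}` on `[1,n]`, and the
two-dimensional entropy is the one-dimensional entropy of `X_{Ω₂}^{p₂}` (symmetrically for `Ω₂`).
To compute the latter, split `ℕ` into the rays `{i p^l : l ≥ 0}` with `p ∤ i`, on which `X_Ω^p`
imposes independent copies of `Ω`. A ray meets `[1,n]` in exactly `k + 1` points for about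
`n (p - 1)² / p^(k + 2)` values of `i`, so `log |P([1,n], X_Ω^p)| / n` is a series in `k` whose
terms converge and are dominated by `(k + 1) log |A| / p^k`.
-/
open Finset

section Patterns

variable {A : Type*}

lemma pattCount_Iio_le [Finite A] (Z : Set (ℕ → A)) (k : ℕ) :
    pattCount (Set.Iio k) Z ≤ Nat.card A ^ k := by
  calc pattCount (Set.Iio k) Z ≤ Nat.card (Set.univ : Set (Set.Iio k → A)) :=
        Nat.card_mono (Set.toFinite _) (Set.subset_univ _)
    _ = Nat.card A ^ k := by simp [Nat.card_fun]

lemma pattCount_Iio_pos [Finite A] {Z : Set (ℕ → A)} (hZ : Z.Nonempty) (k : ℕ) :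
    0 < pattCount (Set.Iio k) Z :=
  have := (hZ.image (Set.Iio k).domRestrict).to_subtype
  Nat.card_pos (α := (Set.Iio k).domRestrict '' Z)

lemma log_pattCount_Iio_le [Finite A] (Z : Set (ℕ → A)) (k : ℕ) :
    Real.log (pattCount (Set.Iio k) Z) ≤ k * Real.log (Nat.card A) := by
  rcases (pattCount (Set.Iio k) Z).eq_zero_or_pos with h | h
  · rw [h, Nat.cast_zero, Real.log_zero]
    exact mul_nonneg k.cast_nonneg (Real.log_natCast_nonneg _)
  · rw [← Real.log_pow]
    exact Real.log_le_log (by exact_mod_cast h) (by exact_mod_cast pattCount_Iio_le Z k)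

lemma pattCount_eq_prod_of_rays {ι G : Type*} (E : ι × ℕ ≃ G) {Λ : Set G} {len : ι → ℕ}
    (hΛ : ∀ i l, E (i, l) ∈ Λ ↔ l < len i) {W : ι → Set (ℕ → A)} (hW : ∀ i, (W i).Nonempty)
    {S : Finset ι} (hS : ∀ i, len i ≠ 0 → i ∈ S) :
    pattCount Λ {x | ∀ i, (fun l => x (E (i, l))) ∈ W i}
      = ∏ i ∈ S, pattCount (Set.Iio (len i)) (W i) := by
  classical
  set Z : Set (G → A) := {x | ∀ i, (fun l => x (E (i, l))) ∈ W i}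
  let P : ∀ i : S, Set (Set.Iio (len i.1) → A) := fun i => (Set.Iio (len i.1)).domRestrict '' W i.1
  have hmem : ∀ (x : Λ.domRestrict '' Z) (i : S),
      (fun l : Set.Iio (len i.1) => x.1 ⟨E (i.1, l.1), (hΛ i.1 l.1).2 l.2⟩) ∈ P i := by
    rintro ⟨-, y, hy, rfl⟩ i
    exact ⟨fun l => y (E (i.1, l)), hy i.1, rfl⟩
  let f : Λ.domRestrict '' Z → ∀ i : S, P i := fun x i => ⟨_, hmem x i⟩
  have hinj : f.Injective := by
    refine fun x₁ x₂ h => Subtype.ext (funext fun g => ?_)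
    obtain ⟨⟨i, l⟩, hil⟩ := E.surjective g.1
    have hl : l < len i := (hΛ i l).1 (hil ▸ g.2)
    have hg : g = ⟨E (i, l), (hΛ i l).2 hl⟩ := Subtype.ext hil.symm
    rw [hg]
    exact congrFun (congrArg Subtype.val (congrFun h ⟨i, hS i (by omega)⟩)) ⟨l, hl⟩
  have hsurj : f.Surjective := by
    intro q
    have hext : ∀ i, ∃ w ∈ W i, ∀ hi : i ∈ S, (Set.Iio (len i)).domRestrict w = (q ⟨i, hi⟩).1 := by
      intro i
      by_cases hi : i ∈ S
      · obtain ⟨w, hw, hrw⟩ := (q ⟨i, hi⟩).2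
        exact ⟨w, hw, fun _ => hrw⟩
      · exact ⟨(hW i).some, (hW i).some_mem, fun h => absurd h hi⟩
    choose w hwW hwq using hext
    have hy : (fun g => w (E.symm g).1 (E.symm g).2) ∈ Z := by
      intro i
      simpa only [E.symm_apply_apply] using hwW i
    refine ⟨⟨_, _, hy, rfl⟩, funext fun ⟨i, hi⟩ => Subtype.ext (funext fun l => ?_)⟩
    simpa only [f, Set.domRestrict_apply, E.symm_apply_apply] using congrFun (hwq i hi) l
  calc pattCount Λ Z = Nat.card (∀ i : S, P i) := Nat.card_eq_of_bijective f ⟨hinj, hsurj⟩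
    _ = _ := by rw [Nat.card_pi, ← Finset.prod_coe_sort S]; rfl

lemma pattCount_eq_pow_of_rays {G : Type*} (E : ℕ × ℕ ≃ G) {Λ : Set G} {m n : ℕ}
    (hΛ : ∀ i l, E (i, l) ∈ Λ ↔ i < m ∧ l < n) {Y : Set (ℕ → A)} (hY : Y.Nonempty) :
    pattCount Λ {x | ∀ i, (fun l => x (E (i, l))) ∈ Y} = pattCount (Set.Iio n) Y ^ m := by
  have hlen : ∀ i l, E (i, l) ∈ Λ ↔ l < if i < m then n else 0 := by
    intro i l
    split_ifs with hi <;> simp [hΛ, hi]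
  rw [pattCount_eq_prod_of_rays E hlen (fun _ => hY) (S := range m)
      (fun i hi => mem_range.2 (by by_contra h; simp [h] at hi)),
    prod_congr rfl fun i hi => by rw [if_pos (mem_range.1 hi)], prod_const, card_range]

lemma mulSubshift_univ (p : ℕ) : mulSubshift p (Set.univ : Set (ℕ → A)) = Set.univ :=
  Set.eq_univ_of_forall fun _ _ _ _ => trivial

lemma pattCount_box2_axial2_univ_left {Y : Set (ℕ → A)} (hY : Y.Nonempty) (m n : ℕ) :
    pattCount (box2 m n) (axial2 Set.univ Y) = pattCount (Set.Iio n) Y ^ m := by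
  have hZ : axial2 Set.univ Y = {x | ∀ i, (fun j => x (Equiv.refl _ (i, j))) ∈ Y} := by
    simp [axial2]
  rw [hZ, pattCount_eq_pow_of_rays (m := m) (n := n) _ (by simp [box2]) hY]

lemma pattCount_box2_axial2_univ_right {X : Set (ℕ → A)} (hX : X.Nonempty)
    (m n : ℕ) : pattCount (box2 m n) (axial2 X Set.univ) = pattCount (Set.Iio m) X ^ n := by
  have hZ : axial2 X Set.univ = {x | ∀ j, (fun i => x (Equiv.prodComm _ _ (j, i))) ∈ X} := by
    simp [axial2]
  rw [hZ, pattCount_eq_pow_of_rays (m := n) (n := m) _ (by simp [box2, and_comm]) hX]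

end Patterns

lemma tendsto_natDiv_div_atTop (q : ℕ) :
    Tendsto (fun n : ℕ => ((n / q : ℕ) : ℝ) / n) atTop (nhds (1 / q)) := by
  refine ((tendsto_nat_floor_mul_div_atTop (a := (1 / q : ℝ)) (by positivity)).comp
    tendsto_natCast_atTop_atTop).congr fun n => ?_
  simp [← Nat.floor_div_eq_div (K := ℝ), div_eq_inv_mul]

section MulRays

variable {A : Type*} {p : ℕ}

lemma pos_of_not_dvd {i : ℕ} (hi : ¬ p ∣ i) : 0 < i :=
  Nat.pos_of_ne_zero fun h => hi (h ▸ dvd_zero p)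

lemma eq_and_eq_of_mul_pow_eq (hp : 0 < p) {i j k l : ℕ} (hi : ¬ p ∣ i) (hj : ¬ p ∣ j)
    (h : i * p ^ k = j * p ^ l) : i = j ∧ k = l := by
  wlog hkl : k ≤ l generalizing i j k l
  · obtain ⟨hij, hlk⟩ := this hj hi h.symm (by omega)
    exact ⟨hij.symm, hlk.symm⟩
  obtain ⟨d, rfl⟩ := Nat.exists_eq_add_of_le hkl
  have hid : i = j * p ^ d := by
    rw [pow_add, mul_comm (p ^ k), ← mul_assoc] at h
    exact Nat.eq_of_mul_eq_mul_right (by positivity) h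
  rcases d with _ | d
  · simpa using hid
  · exact absurd (hid ▸ (dvd_pow_self p d.succ_ne_zero).mul_left j) hi

/-- The `- 1` shifts the paper's coordinate `i * p ^ l` to the 0-indexed one. -/
noncomputable def mulRayEquiv (hp : 1 < p) : {i : ℕ // ¬ p ∣ i} × ℕ ≃ ℕ :=
  Equiv.ofBijective (fun il => il.1.1 * p ^ il.2 - 1) <| by
    constructor
    · rintro ⟨⟨i, hi⟩, k⟩ ⟨⟨j, hj⟩, l⟩ h
      have hik : 0 < i * p ^ k := Nat.mul_pos (pos_of_not_dvd hi) (by positivity)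
      have hjl : 0 < j * p ^ l := Nat.mul_pos (pos_of_not_dvd hj) (by positivity)
      obtain ⟨rfl, rfl⟩ := eq_and_eq_of_mul_pow_eq (k := k) (l := l) (by omega) hi hj
        (by simp only at h; omega)
      rfl
    · intro m
      obtain ⟨e, i, hi, he⟩ := Nat.exists_eq_pow_mul_and_not_dvd m.succ_ne_zero p hp.ne'
      exact ⟨(⟨i, hi⟩, e), by simp only; rw [mul_comm, ← he]; rfl⟩

lemma mulSubshift_eq_rays (hp : 1 < p) (Ω : Set (ℕ → A)) :
    mulSubshift p Ω = {x | ∀ i, (fun l => x (mulRayEquiv hp (i, l))) ∈ Ω} :=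
  Set.ext fun _ => ⟨fun h i => h i.1 (pos_of_not_dvd i.2) i.2, fun h i _ hi => h ⟨i, hi⟩⟩

lemma mulSubshift_nonempty (hp : 1 < p) {Ω : Set (ℕ → A)} (hΩ : Ω.Nonempty) :
    (mulSubshift p Ω).Nonempty := by
  obtain ⟨ω, hω⟩ := hΩ
  refine ⟨fun m => ω ((mulRayEquiv hp).symm m).2, ?_⟩
  rw [mulSubshift_eq_rays hp]
  intro i
  simpa only [Equiv.symm_apply_apply] using hω

/-- The number of points of the ray through `i` in the window `[0, n)`. -/
def rayLen (p n i : ℕ) : ℕ := Nat.clog p (n / i + 1)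

lemma lt_rayLen_iff (hp : 1 < p) {n i l : ℕ} (hi : 0 < i) : l < rayLen p n i ↔ i * p ^ l ≤ n := by
  rw [rayLen, Nat.lt_clog_iff_pow_lt hp, Nat.lt_succ_iff, Nat.le_div_iff_mul_le hi, mul_comm]

lemma rayLen_le (hp : 1 < p) {n i : ℕ} (hi : 0 < i) : rayLen p n i ≤ n := by
  by_contra! h
  have := (lt_rayLen_iff hp hi).1 h
  have := Nat.lt_pow_self (n := n) hp
  have := Nat.le_mul_of_pos_left (p ^ n) hi
  omega

lemma mulRayEquiv_apply (hp : 1 < p) (i : {i : ℕ // ¬ p ∣ i}) (l : ℕ) :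
    mulRayEquiv hp (i, l) = i.1 * p ^ l - 1 :=
  rfl

lemma mulRayEquiv_lt_iff (hp : 1 < p) (n : ℕ) (i : {i : ℕ // ¬ p ∣ i}) (l : ℕ) :
    mulRayEquiv hp (i, l) < n ↔ l < rayLen p n i := by
  have : 0 < i.1 * p ^ l := Nat.mul_pos (pos_of_not_dvd i.2) (by positivity)
  rw [lt_rayLen_iff hp (pos_of_not_dvd i.2), mulRayEquiv_apply]
  omega

lemma pattCount_mulSubshift (hp : 1 < p) {Ω : Set (ℕ → A)} (hΩ : Ω.Nonempty) (n : ℕ) :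
    pattCount (Set.Iio n) (mulSubshift p Ω)
      = ∏ i ∈ Iic n with ¬ p ∣ i, pattCount (Set.Iio (rayLen p n i)) Ω := by
  have hS : ∀ i : {i // ¬ p ∣ i}, rayLen p n i ≠ 0 → i ∈ (Iic n).subtype _ := by
    intro i hi
    have := (lt_rayLen_iff hp (pos_of_not_dvd i.2)).1 (Nat.pos_of_ne_zero hi)
    simpa using this
  rw [mulSubshift_eq_rays hp,
    pattCount_eq_prod_of_rays _ (mulRayEquiv_lt_iff hp n) (fun _ => hΩ) hS]
  exact prod_subtype_eq_prod_filter (fun i => pattCount (Set.Iio (rayLen p n i)) Ω)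

def numRaysOfLen (p n k : ℕ) : ℕ := #{i ∈ Iic n | ¬ p ∣ i ∧ rayLen p n i = k}

lemma log_pattCount_mulSubshift [Finite A] (hp : 1 < p) {Ω : Set (ℕ → A)} (hΩ : Ω.Nonempty)
    (n : ℕ) : Real.log (pattCount (Set.Iio n) (mulSubshift p Ω)) = ∑ k ∈ range n,
      (numRaysOfLen p n (k + 1) : ℝ) * Real.log (pattCount (Set.Iio (k + 1)) Ω) := by
  have hmaps : ∀ i ∈ {i ∈ Iic n | ¬ p ∣ i}, rayLen p n i ∈ (range n).map (addRightEmbedding 1) := by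
    intro i hi
    have hi0 := pos_of_not_dvd (mem_filter.1 hi).2
    have hlen := (lt_rayLen_iff hp hi0 (l := 0)).2 (by simpa using (mem_Iic.1 (mem_filter.1 hi).1))
    simp only [Finset.mem_map, mem_range, addRightEmbedding_apply]
    exact ⟨rayLen p n i - 1, by have := rayLen_le hp hi0 (n := n); omega, by omega⟩
  rw [pattCount_mulSubshift hp hΩ, Nat.cast_prod,
    Real.log_prod fun i _ => by exact_mod_cast (pattCount_Iio_pos hΩ _).ne',
    ← sum_fiberwise_of_maps_to hmaps, sum_map]
  refine sum_congr rfl fun k _ => ?_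
  rw [sum_congr rfl fun i hi => by rw [(mem_filter.1 hi).2], sum_const, filter_filter, nsmul_eq_mul]
  rfl

lemma filter_rayLen_eq_succ (hp : 1 < p) (n k : ℕ) :
    {i ∈ Iic n | ¬ p ∣ i ∧ rayLen p n i = k + 1}
      = {i ∈ Ioc (n / p ^ (k + 1)) (n / p ^ k) | ¬ p ∣ i} := by
  ext i
  simp only [mem_filter, mem_Iic, mem_Ioc]
  by_cases hi : p ∣ i
  · simp [hi]
  have hi0 := pos_of_not_dvd hi
  have hlen : rayLen p n i = k + 1 ↔ i * p ^ k ≤ n ∧ ¬ i * p ^ (k + 1) ≤ n := by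
    rw [← lt_rayLen_iff hp hi0, ← lt_rayLen_iff hp hi0]
    omega
  have hin : i * p ^ k ≤ n → i ≤ n := (Nat.le_mul_of_pos_right i (by positivity)).trans
  rw [hlen, Nat.le_div_iff_mul_le (by positivity), Nat.div_lt_iff_lt_mul (by positivity), not_le]
  tauto

lemma card_filter_not_dvd_Ioc_zero (p m : ℕ) :
    (#{i ∈ Ioc 0 m | ¬ p ∣ i} : ℝ) = m - (m / p : ℕ) := by
  have h := card_filter_add_card_filter_not (s := Ioc 0 m) (p := (p ∣ ·))
  rw [Nat.Ioc_filter_dvd_card_eq_div, Nat.card_Ioc, Nat.sub_zero] at h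
  rw [eq_sub_iff_add_eq, ← Nat.cast_add, add_comm, h]

lemma card_filter_not_dvd_Ioc (p : ℕ) {a b : ℕ} (hab : a ≤ b) :
    (#{i ∈ Ioc a b | ¬ p ∣ i} : ℝ) = (b - (b / p : ℕ)) - (a - (a / p : ℕ)) := by
  have hsplit := card_union_of_disjoint
    (disjoint_filter_filter (p := fun i : ℕ => ¬ p ∣ i) (q := fun i : ℕ => ¬ p ∣ i)
      (Ioc_disjoint_Ioc_of_le (a := 0) (b := a) (c := a) (d := b) le_rfl))
  rw [← filter_union, Ioc_union_Ioc_eq_Ioc a.zero_le hab] at hsplit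
  rw [← card_filter_not_dvd_Ioc_zero, ← card_filter_not_dvd_Ioc_zero, hsplit, Nat.cast_add]
  ring

lemma numRaysOfLen_succ_eq (hp : 1 < p) (n k : ℕ) :
    (numRaysOfLen p n (k + 1) : ℝ) = ((n / p ^ k : ℕ) - (n / p ^ (k + 1) : ℕ))
      - ((n / p ^ (k + 1) : ℕ) - (n / p ^ (k + 2) : ℕ)) := by
  have hdiv : ∀ j, n / p ^ j / p = n / p ^ (j + 1) := fun j => by
    rw [Nat.div_div_eq_div_mul, pow_succ]
  rw [numRaysOfLen, filter_rayLen_eq_succ hp, card_filter_not_dvd_Ioc p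
    (Nat.div_le_div_left (Nat.pow_le_pow_right (by omega) k.le_succ) (by positivity)), hdiv, hdiv]

lemma numRaysOfLen_succ_le (hp : 1 < p) (n k : ℕ) : numRaysOfLen p n (k + 1) ≤ n / p ^ k := by
  rw [numRaysOfLen, filter_rayLen_eq_succ hp]
  exact (card_filter_le _ _).trans (by simp)

lemma tendsto_numRaysOfLen_div (hp : 1 < p) (k : ℕ) :
    Tendsto (fun n => (numRaysOfLen p n (k + 1) : ℝ) / n) atTop
      (nhds (((p : ℝ) - 1) ^ 2 / p ^ 2 / p ^ k)) := by
  have hd := fun j => tendsto_natDiv_div_atTop (p ^ j)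
  have hlim := ((hd k).sub (hd (k + 1))).sub ((hd (k + 1)).sub (hd (k + 2)))
  have hp0 : (p : ℝ) ≠ 0 := by positivity
  convert hlim using 2 with n
  · rw [numRaysOfLen_succ_eq hp]
    ring
  · push_cast
    field_simp
    ring

lemma numRaysOfLen_div_le (hp : 1 < p) (n k : ℕ) :
    (numRaysOfLen p n (k + 1) : ℝ) / n ≤ 1 / p ^ k := by
  calc (numRaysOfLen p n (k + 1) : ℝ) / n ≤ ((n / p ^ k : ℕ) : ℝ) / n := by
        gcongr
        exact_mod_cast numRaysOfLen_succ_le hp n k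
    _ ≤ 1 / p ^ k := by
        rcases n.eq_zero_or_pos with rfl | hn
        · simp
        rw [div_le_div_iff₀ (by positivity) (by positivity), one_mul]
        exact_mod_cast Nat.div_mul_le_self n (p ^ k)

lemma summable_succ_mul_div_pow (hp : 1 < p) (c : ℝ) :
    Summable fun k : ℕ => ((k : ℝ) + 1) * c / p ^ k := by
  have hr : ‖(p : ℝ)⁻¹‖ < 1 := by
    rw [norm_inv, Real.norm_natCast]
    exact inv_lt_one_of_one_lt₀ (by exact_mod_cast hp)
  refine (((summable_pow_mul_geometric_of_norm_lt_one 1 hr).add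
    (summable_geometric_of_norm_lt_one hr)).mul_right c).congr fun k => ?_
  simp only [pow_one, inv_pow, div_eq_mul_inv]
  ring

theorem tendsto_log_pattCount_mulSubshift [Finite A] (hp : 1 < p) {Ω : Set (ℕ → A)}
    (hΩ : Ω.Nonempty) :
    Tendsto (fun n : ℕ => Real.log (pattCount (Set.Iio n) (mulSubshift p Ω)) / n) atTop
      (nhds ((((p : ℝ) - 1) ^ 2 / (p : ℝ) ^ 2) *
        ∑' i : ℕ, Real.log (pattCount (Set.Iio (i + 1)) Ω) / (p : ℝ) ^ i)) := by
  set L : ℕ → ℝ := fun k => Real.log (pattCount (Set.Iio (k + 1)) Ω)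
  have hseq : ∀ n : ℕ, Real.log (pattCount (Set.Iio n) (mulSubshift p Ω)) / n
      = ∑' k, (numRaysOfLen p n (k + 1) : ℝ) / n * L k := by
    intro n
    have hvanish : ∀ k ∉ range n, (numRaysOfLen p n (k + 1) : ℝ) / n * L k = 0 := by
      intro k hk
      have := numRaysOfLen_succ_le hp n k
      rw [Nat.div_eq_of_lt ((Nat.lt_pow_self hp).trans_le
        (Nat.pow_le_pow_right (by omega) (not_lt.1 (mem_range.not.1 hk))))] at this
      simp [Nat.le_zero.1 this]
    rw [tsum_eq_sum hvanish, log_pattCount_mulSubshift hp hΩ, sum_div]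
    exact sum_congr rfl fun k _ => div_mul_eq_mul_div _ _ _ |>.symm
  have hlim : ((p : ℝ) - 1) ^ 2 / p ^ 2 * ∑' k, L k / p ^ k
      = ∑' k, ((p : ℝ) - 1) ^ 2 / p ^ 2 / p ^ k * L k := by
    rw [← tsum_mul_left]
    exact tsum_congr fun k => by ring
  have hbound : ∀ n k, ‖(numRaysOfLen p n (k + 1) : ℝ) / n * L k‖
      ≤ (k + 1) * Real.log (Nat.card A) / p ^ k := by
    intro n k
    have hL : L k ≤ (k + 1) * Real.log (Nat.card A) := by
      simpa using log_pattCount_Iio_le Ω (k + 1)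
    rw [Real.norm_of_nonneg (by positivity)]
    calc (numRaysOfLen p n (k + 1) : ℝ) / n * L k
        ≤ 1 / p ^ k * ((k + 1) * Real.log (Nat.card A)) :=
          mul_le_mul (numRaysOfLen_div_le hp n k) hL (Real.log_natCast_nonneg _) (by positivity)
      _ = (k + 1) * Real.log (Nat.card A) / p ^ k := by ring
  have := tendsto_tsum_of_dominated_convergence (summable_succ_mul_div_pow hp _)
    (fun k => (tendsto_numRaysOfLen_div hp k).mul_const (L k)) (Eventually.of_forall hbound)
  rwa [← hlim, ← funext hseq] at this

end MulRays

lemma tendsto_log_pow_div_mul {α : Type*} {l : Filter α} {c : ℕ → ℕ} {h : ℝ}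
    (hc : Tendsto (fun n : ℕ => Real.log (c n) / n) atTop (nhds h)) {a b : α → ℕ}
    (ha : Tendsto a l atTop) (hb : ∀ᶠ x in l, b x ≠ 0) :
    Tendsto (fun x => Real.log ((c (a x) ^ b x : ℕ) : ℝ) / (b x * a x)) l (nhds h) :=
  (hc.comp ha).congr' <| hb.mono fun x hx => by
    beta_reduce
    rw [Function.comp_apply, Nat.cast_pow, Real.log_pow,
      mul_div_mul_left _ _ (by exact_mod_cast hx)]

theorem entropy_axialProd_mulSubshift_fullShift_general
    {A : Type*} [Fintype A] [TopologicalSpace A]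
    (p1 p2 : ℕ) (hp1 : 2 ≤ p1) (hp2 : 2 ≤ p2)
    (Ω1 Ω2 : Set (ℕ → A)) (hΩ1 : IsSubshift Ω1) (hΩ2 : IsSubshift Ω2) :
    (Ω1 = Set.univ →
      Tendsto
        (fun mn : ℕ × ℕ =>
          Real.log (pattCount (box2 mn.1 mn.2)
              (axial2 (mulSubshift p1 Ω1) (mulSubshift p2 Ω2))) /
            ((mn.1 : ℝ) * (mn.2 : ℝ)))
        atTop
        (nhds ((((p2 : ℝ) - 1) ^ 2 / (p2 : ℝ) ^ 2) *
          ∑' i : ℕ, Real.log (pattCount (Set.Iio (i + 1)) Ω2) / (p2 : ℝ) ^ i))) ∧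
    (Ω2 = Set.univ →
      Tendsto
        (fun mn : ℕ × ℕ =>
          Real.log (pattCount (box2 mn.1 mn.2)
              (axial2 (mulSubshift p1 Ω1) (mulSubshift p2 Ω2))) /
            ((mn.1 : ℝ) * (mn.2 : ℝ)))
        atTop
        (nhds ((((p1 : ℝ) - 1) ^ 2 / (p1 : ℝ) ^ 2) *
          ∑' i : ℕ, Real.log (pattCount (Set.Iio (i + 1)) Ω1) / (p1 : ℝ) ^ i))) := by
  have hfst : Tendsto (Prod.fst : ℕ × ℕ → ℕ) atTop atTop := by
    rw [← prod_atTop_atTop_eq]; exact tendsto_fst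
  have hsnd : Tendsto (Prod.snd : ℕ × ℕ → ℕ) atTop atTop := by
    rw [← prod_atTop_atTop_eq]; exact tendsto_snd
  refine ⟨fun h1 => ?_, fun h2 => ?_⟩
  · rw [h1, mulSubshift_univ]
    simp only [pattCount_box2_axial2_univ_left (mulSubshift_nonempty hp2 hΩ2.1)]
    exact tendsto_log_pow_div_mul (tendsto_log_pattCount_mulSubshift hp2 hΩ2.1) hsnd
      (hfst.eventually_ne_atTop 0)
  · rw [h2, mulSubshift_univ]
    simp only [pattCount_box2_axial2_univ_right (mulSubshift_nonempty hp1 hΩ1.1)]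
    exact (tendsto_log_pow_div_mul (tendsto_log_pattCount_mulSubshift hp1 hΩ1.1) hfst
      (hsnd.eventually_ne_atTop 0)).congr fun mn => by rw [mul_comm (mn.2 : ℝ)]

/-- Corollary to Theorem 2.1: if one factor is the full shift, the entropy of
`X_{Ω1}^{p1} ⊗ X_{Ω2}^{p2}` reduces to the one-dimensional formula for the other factor. -/
theorem entropy_axialProd_mulSubshift_fullShift
    {A : Type*} [Fintype A] [TopologicalSpace A] [DiscreteTopology A]
    (p1 p2 : ℕ) (hp1 : 2 ≤ p1) (hp2 : 2 ≤ p2)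
    (Ω1 Ω2 : Set (ℕ → A)) (hΩ1 : IsSubshift Ω1) (hΩ2 : IsSubshift Ω2) :
    (Ω1 = Set.univ →
      Tendsto
        (fun mn : ℕ × ℕ =>
          Real.log (pattCount (box2 mn.1 mn.2)
              (axial2 (mulSubshift p1 Ω1) (mulSubshift p2 Ω2))) /
            ((mn.1 : ℝ) * (mn.2 : ℝ)))
        atTop
        (nhds ((((p2 : ℝ) - 1) ^ 2 / (p2 : ℝ) ^ 2) *
          ∑' i : ℕ, Real.log (pattCount (Set.Iio (i + 1)) Ω2) / (p2 : ℝ) ^ i))) ∧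
    (Ω2 = Set.univ →
      Tendsto
        (fun mn : ℕ × ℕ =>
          Real.log (pattCount (box2 mn.1 mn.2)
              (axial2 (mulSubshift p1 Ω1) (mulSubshift p2 Ω2))) /
            ((mn.1 : ℝ) * (mn.2 : ℝ)))
        atTop
        (nhds ((((p1 : ℝ) - 1) ^ 2 / (p1 : ℝ) ^ 2) *
          ∑' i : ℕ, Real.log (pattCount (Set.Iio (i + 1)) Ω1) / (p1 : ℝ) ^ i))) :=
  entropy_axialProd_mulSubshift_fullShift_general p1 p2 hp1 hp2 Ω1 Ω2 hΩ1 hΩ2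
end

section
/- Let A be a finite alphabet, let p ≥ 2 be an integer, and let Ω, X ⊆ A^ℕ be subshifts. For each i ≥ 1 the limit λ_i = lim_{j→∞} (1/j) · log|P([1,i]×[1,j], Ω ⊗ X)| exists, the entropy of the axial product X_Ω^p ⊗ X on ℕ² exists, and h(X_Ω^p ⊗ X) = ((p−1)²/p²) · Σ_{i=1}^∞ λ_i / p^{i−1}. -/
/-
Every positive integer is uniquely `i * p ^ l` with `p ∤ i`, and the rows of `X_Ω^p ⊗ X` are
constrained only along these rays, independently of each other, while columns stay columns. So a
pattern of `X_Ω^p ⊗ X` on `[1,m] × [1,n]` is an independent choice, for each `i ≤ m` with `p ∤ i`,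
of a pattern of `Ω ⊗ X` on `[1,ℓ] × [1,n]`, where `ℓ = ⌊log_p (m / i)⌋ + 1` is the length of the
ray inside `[1,m]`. About `m (p - 1)² / p ^ (k + 2)` of the `i` have `ℓ = k + 1`, the column
counts of `Ω ⊗ X` are submultiplicative by shift invariance of `X` (so Fekete's lemma gives
`λ_ℓ`), and dominated convergence passes the double limit through the sum over `k`.
-/

open Filter Real

namespace MulSubshiftEntropy

open Finset Topology

variable {A : Type*}

lemma natCard_image_eq_of_eq_iff {α β γ : Type*} {f : α → β} {g : α → γ} {S : Set α}
    (h : ∀ x ∈ S, ∀ y ∈ S, f x = f y ↔ g x = g y) : Nat.card (f '' S) = Nat.card (g '' S) := by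
  set F : α → β × γ := fun x => (f x, g x)
  have hfst : Set.InjOn Prod.fst (F '' S) := by
    rintro _ ⟨x, hx, rfl⟩ _ ⟨y, hy, rfl⟩ hxy
    exact Prod.ext hxy ((h x hx y hy).mp hxy)
  have hsnd : Set.InjOn Prod.snd (F '' S) := by
    rintro _ ⟨x, hx, rfl⟩ _ ⟨y, hy, rfl⟩ hxy
    exact Prod.ext ((h x hx y hy).mpr hxy) hxy
  simp only [Nat.card_coe_set_eq]
  calc (f '' S).ncard = (Prod.fst '' (F '' S)).ncard := by rw [Set.image_image]
    _ = (Prod.snd '' (F '' S)).ncard := by rw [hfst.ncard_image, hsnd.ncard_image]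
    _ = (g '' S).ncard := by rw [Set.image_image]

lemma mem_box2 {m n a b : ℕ} : (a, b) ∈ box2 m n ↔ a < m ∧ b < n := by
  simp [box2]

instance (m n : ℕ) : Finite (box2 m n) := (Set.finite_Iio m |>.prod (Set.finite_Iio n)).to_subtype

lemma natCard_box2 (m n : ℕ) : Nat.card (box2 m n) = m * n := by
  simp [box2]

lemma pattCount_empty {G : Type*} (Λ : Set G) : pattCount Λ (∅ : Set (G → A)) = 0 := by
  simp [pattCount]

lemma pattCount_pos [Finite A] {G : Type*} {Λ : Set G} [Finite Λ] {Z : Set (G → A)}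
    (hZ : Z.Nonempty) : 0 < pattCount Λ Z :=
  Nat.card_pos_iff.mpr ⟨(hZ.image _).to_subtype, inferInstance⟩

lemma pattCount_le_card_pow [Fintype A] {G : Type*} (Λ : Set G) [Finite Λ] (Z : Set (G → A)) :
    pattCount Λ Z ≤ Fintype.card A ^ Nat.card Λ := by
  rw [← Nat.card_eq_fintype_card, ← Nat.card_fun]
  exact Finite.card_subtype_le _

lemma log_natCast_le_log_natCast {a b : ℕ} (h : a ≤ b) : Real.log a ≤ Real.log b := by
  rcases Nat.eq_zero_or_pos a with rfl | ha
  · simpa using Real.log_natCast_nonneg b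
  · exact Real.log_le_log (by exact_mod_cast ha) (by exact_mod_cast h)

lemma abs_log_pattCount_box2_le [Fintype A] (m n : ℕ) (Z : Set (ℕ × ℕ → A)) :
    |Real.log (pattCount (box2 m n) Z)| ≤ m * n * Real.log (Fintype.card A) := by
  rw [abs_of_nonneg (Real.log_natCast_nonneg _)]
  calc Real.log (pattCount (box2 m n) Z) ≤ Real.log (Fintype.card A ^ Nat.card (box2 m n) : ℕ) :=
        log_natCast_le_log_natCast (pattCount_le_card_pow _ Z)
    _ = m * n * Real.log (Fintype.card A) := by
        rw [natCard_box2, Nat.cast_pow, Real.log_pow]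
        push_cast
        ring

lemma shift_add_mem {X : Set (ℕ → A)} (hX : ∀ x ∈ X, (fun n => x (n + 1)) ∈ X) (a : ℕ)
    {x : ℕ → A} (hx : x ∈ X) : (fun n => x (n + a)) ∈ X := by
  induction a with
  | zero => exact hx
  | succ a ih => simpa only [Nat.add_right_comm _ 1 a, ← add_assoc] using hX _ ih

lemma shift_mem_axial2 {Ω X : Set (ℕ → A)} (hX : ∀ x ∈ X, (fun n => x (n + 1)) ∈ X) (a : ℕ)
    {x : ℕ × ℕ → A} (hx : x ∈ axial2 Ω X) : (fun q : ℕ × ℕ => x (q.1, q.2 + a)) ∈ axial2 Ω X :=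
  ⟨fun j => hx.1 (j + a), fun i => shift_add_mem hX a (hx.2 i)⟩

lemma pattCount_box2_add_le [Finite A] {W : Set (ℕ × ℕ → A)} {a : ℕ}
    (hW : ∀ x ∈ W, (fun q : ℕ × ℕ => x (q.1, q.2 + a)) ∈ W) (i b : ℕ) :
    pattCount (box2 i (a + b)) W ≤ pattCount (box2 i a) W * pattCount (box2 i b) W := by
  set shift : (ℕ × ℕ → A) → ℕ × ℕ → A := fun x q => x (q.1, q.2 + a)
  set F := fun x => ((box2 i a).domRestrict x, (box2 i b).domRestrict (shift x))
  have hfib : ∀ x y : ℕ × ℕ → A,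
      (box2 i (a + b)).domRestrict x = (box2 i (a + b)).domRestrict y ↔ F x = F y := by
    intro x y
    simp only [F, Prod.mk.injEq, Set.domRestrict_eq_domRestrict_iff]
    constructor
    · intro h
      refine ⟨fun ⟨s, t⟩ hst => h ?_, fun ⟨s, t⟩ hst => h ?_⟩ <;>
        rw [mem_box2] at hst ⊢ <;> omega
    · rintro ⟨h₁, h₂⟩ ⟨s, t⟩ hst
      obtain ⟨hs, ht⟩ := mem_box2.mp hst
      rcases lt_or_ge t a with hta | hta
      · exact h₁ (mem_box2.mpr ⟨hs, hta⟩)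
      · simpa [shift, Nat.sub_add_cancel hta] using
          h₂ (x := (s, t - a)) (mem_box2.mpr ⟨hs, by omega⟩)
  calc pattCount (box2 i (a + b)) W = Nat.card (F '' W) :=
        natCard_image_eq_of_eq_iff fun x _ y _ => hfib x y
    _ ≤ Nat.card (((box2 i a).domRestrict '' W) ×ˢ ((box2 i b).domRestrict '' W)) :=
        Nat.card_mono (Set.toFinite _) (by
          rintro _ ⟨x, hx, rfl⟩
          exact ⟨⟨x, hx, rfl⟩, ⟨shift x, hW x hx, rfl⟩⟩)
    _ = pattCount (box2 i a) W * pattCount (box2 i b) W := by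
        rw [Nat.card_congr (Equiv.Set.prod _ _), Nat.card_prod]
        rfl

lemma subadditive_log_natCast {M : ℕ → ℕ} (h : ∀ a b, M (a + b) ≤ M a * M b) :
    Subadditive fun n => Real.log (M n) := by
  intro a b
  rcases Nat.eq_zero_or_pos (M a * M b) with hab | hab
  · have hzero : M (a + b) = 0 := Nat.le_zero.mp (hab ▸ h a b)
    simp only [hzero, Nat.cast_zero, Real.log_zero]
    exact add_nonneg (Real.log_natCast_nonneg _) (Real.log_natCast_nonneg _)
  · obtain ⟨ha, hb⟩ := Nat.mul_ne_zero_iff.mp hab.ne'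
    calc Real.log (M (a + b)) ≤ Real.log (M a * M b : ℕ) := log_natCast_le_log_natCast (h a b)
      _ = Real.log (M a) + Real.log (M b) := by
        push_cast
        exact Real.log_mul (Nat.cast_ne_zero.mpr ha) (Nat.cast_ne_zero.mpr hb)

lemma subadditive_log_pattCount_axial2 [Finite A] (Ω : Set (ℕ → A)) {X : Set (ℕ → A)}
    (hX : ∀ x ∈ X, (fun n => x (n + 1)) ∈ X) (i : ℕ) :
    Subadditive fun n => Real.log (pattCount (box2 i n) (axial2 Ω X)) :=
  subadditive_log_natCast fun a b =>
    pattCount_box2_add_le (fun _ hx => shift_mem_axial2 hX a hx) i b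

section Rays

variable {p : ℕ}

lemma maxPowDvdDiv_mul_pow (hp : p ≠ 0) {i : ℕ} (hi : 0 < i) (hd : ¬ p ∣ i) (l : ℕ) :
    p.maxPowDvdDiv (i * p ^ l) = (l, i) :=
  Nat.maxPowDvdDiv_of_pow_mul_eq (by positivity) (mul_comm _ _) hd

lemma divMaxPow_pos (p a : ℕ) : 0 < (a + 1).divMaxPow p :=
  Nat.pos_of_ne_zero <| left_ne_zero_of_mul <| by
    rw [Nat.divMaxPow_mul_pow_padicValNat]; exact a.succ_ne_zero

def ray (p i : ℕ) (x : ℕ × ℕ → A) : ℕ × ℕ → A := fun q => x (i * p ^ q.1 - 1, q.2)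

/-- Inverse of the rays: the point `(a, j)`, where `a + 1 = i * p ^ l` with `p ∤ i`, is read off
`y i` at `(l, j)`. -/
def rayGlue (p : ℕ) (y : ℕ → ℕ × ℕ → A) : ℕ × ℕ → A :=
  fun q => y ((q.1 + 1).divMaxPow p) (padicValNat p (q.1 + 1), q.2)

lemma ray_rayGlue (hp : p ≠ 0) {i : ℕ} (hi : 0 < i) (hd : ¬ p ∣ i) (y : ℕ → ℕ × ℕ → A) :
    ray p i (rayGlue p y) = y i := by
  funext ⟨l, j⟩
  have hpos : 0 < i * p ^ l := by positivity
  simp only [ray, rayGlue, Nat.sub_add_cancel hpos, Nat.divMaxPow, padicValNat,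
    maxPowDvdDiv_mul_pow hp hi hd l]

lemma mem_axial2_mulSubshift_iff (hp : 1 < p) {Ω Y : Set (ℕ → A)} {x : ℕ × ℕ → A} :
    x ∈ axial2 (mulSubshift p Ω) Y ↔ ∀ i, 0 < i → ¬ p ∣ i → ray p i x ∈ axial2 Ω Y := by
  constructor
  · rintro ⟨hrow, hcol⟩ i hi hd
    exact ⟨fun j => hrow j i hi hd, fun l => hcol (i * p ^ l - 1)⟩
  · intro h
    refine ⟨fun j i hi hd => (h i hi hd).1 j, fun a => ?_⟩
    simpa [ray, Nat.divMaxPow_mul_pow_padicValNat] using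
      (h _ (divMaxPow_pos p a) (Nat.not_dvd_divMaxPow hp a.succ_ne_zero)).2
        (padicValNat p (a + 1))

lemma rayGlue_mem (hp : 1 < p) {Ω Y : Set (ℕ → A)} {y : ℕ → ℕ × ℕ → A}
    (hy : ∀ i, y i ∈ axial2 Ω Y) : rayGlue p y ∈ axial2 (mulSubshift p Ω) Y :=
  (mem_axial2_mulSubshift_iff hp).mpr fun i hi hd => ray_rayGlue (by omega) hi hd y ▸ hy i

def nonMultiples (p N : ℕ) : Finset ℕ := {i ∈ Ioc 0 N | ¬ p ∣ i}

lemma mem_nonMultiples {N i : ℕ} : i ∈ nonMultiples p N ↔ (0 < i ∧ i ≤ N) ∧ ¬ p ∣ i := by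
  simp [nonMultiples]

lemma mul_pow_le_iff_le_log (hp : 1 < p) {i m l : ℕ} (hi : 0 < i) (him : i ≤ m) :
    i * p ^ l ≤ m ↔ l ≤ Nat.log p (m / i) := by
  rw [Nat.le_log_iff_pow_le hp (Nat.div_pos him hi).ne', Nat.le_div_iff_mul_le hi, mul_comm]

lemma eqOn_box2_iff_forall_eqOn_ray (hp : 1 < p) {x y : ℕ × ℕ → A} {m n : ℕ} :
    Set.EqOn x y (box2 m n) ↔ ∀ i ∈ nonMultiples p m,
      Set.EqOn (ray p i x) (ray p i y) (box2 (Nat.log p (m / i) + 1) n) := by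
  constructor
  · intro h i hi ⟨l, j⟩ hlj
    obtain ⟨⟨hi0, him⟩, -⟩ := mem_nonMultiples.mp hi
    obtain ⟨hl, hj⟩ := mem_box2.mp hlj
    have hle := (mul_pow_le_iff_le_log hp hi0 him).mpr (Nat.lt_succ_iff.mp hl)
    have hpos : 0 < i * p ^ l := by positivity
    exact h (show (i * p ^ l - 1, j) ∈ box2 m n from mem_box2.mpr ⟨by omega, hj⟩)
  · intro h ⟨a, b⟩ hab
    obtain ⟨ha, hb⟩ := mem_box2.mp hab
    have hil : (a + 1).divMaxPow p * p ^ padicValNat p (a + 1) = a + 1 :=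
      Nat.divMaxPow_mul_pow_padicValNat p (a + 1)
    have hi0 := divMaxPow_pos p a
    have him : (a + 1).divMaxPow p ≤ m :=
      (Nat.le_mul_of_pos_right _ (by positivity)).trans (hil.trans_le ha)
    have hl := (mul_pow_le_iff_le_log hp hi0 him).mp (hil.trans_le ha)
    simpa [ray, hil] using h _ (mem_nonMultiples.mpr
      ⟨⟨hi0, him⟩, Nat.not_dvd_divMaxPow hp a.succ_ne_zero⟩)
      (mem_box2.mpr ⟨Nat.lt_succ_of_le hl, hb⟩)

def rayPatterns (p m n : ℕ) (x : ℕ × ℕ → A) :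
    ∀ i : nonMultiples p m, box2 (Nat.log p (m / i) + 1) n → A :=
  fun i => (box2 _ n).domRestrict (ray p i x)

lemma image_rayPatterns (hp : 1 < p) {Ω Y : Set (ℕ → A)} (hW : (axial2 Ω Y).Nonempty)
    (m n : ℕ) : rayPatterns p m n '' axial2 (mulSubshift p Ω) Y =
      Set.univ.pi fun (i : nonMultiples p m) =>
        (box2 (Nat.log p (m / i) + 1) n).domRestrict '' axial2 Ω Y := by
  classical
  ext g
  constructor
  · rintro ⟨x, hx, rfl⟩ i -
    obtain ⟨⟨hi0, -⟩, hd⟩ := mem_nonMultiples.mp i.2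
    exact ⟨_, (mem_axial2_mulSubshift_iff hp).mp hx i hi0 hd, rfl⟩
  · intro hg
    choose y hyW hyg using fun i => hg i (Set.mem_univ i)
    obtain ⟨y₀, hy₀⟩ := hW
    let y' : ℕ → ℕ × ℕ → A := fun i => if h : i ∈ nonMultiples p m then y ⟨i, h⟩ else y₀
    have hy' : ∀ i, y' i ∈ axial2 Ω Y := fun i => by
      unfold y'
      split_ifs
      exacts [hyW _, hy₀]
    refine ⟨rayGlue p y', rayGlue_mem hp hy', funext fun i => ?_⟩
    obtain ⟨⟨hi0, -⟩, hd⟩ := mem_nonMultiples.mp i.2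
    simp [rayPatterns, ray_rayGlue (by omega : p ≠ 0) hi0 hd, y', i.2, hyg]

lemma pattCount_box2_axial2_mulSubshift [Finite A] (hp : 1 < p) {Ω Y : Set (ℕ → A)}
    (hW : (axial2 Ω Y).Nonempty) (m n : ℕ) :
    pattCount (box2 m n) (axial2 (mulSubshift p Ω) Y) =
      ∏ i ∈ nonMultiples p m, pattCount (box2 (Nat.log p (m / i) + 1) n) (axial2 Ω Y) := by
  have hfib : ∀ x y : ℕ × ℕ → A, (box2 m n).domRestrict x = (box2 m n).domRestrict y ↔
      rayPatterns p m n x = rayPatterns p m n y := fun x y => by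
    rw [Set.domRestrict_eq_domRestrict_iff, eqOn_box2_iff_forall_eqOn_ray hp, funext_iff,
      Subtype.forall]
    simp only [rayPatterns, Set.domRestrict_eq_domRestrict_iff]
  calc pattCount (box2 m n) (axial2 (mulSubshift p Ω) Y)
      = Nat.card (rayPatterns p m n '' axial2 (mulSubshift p Ω) Y) :=
        natCard_image_eq_of_eq_iff fun x _ y _ => hfib x y
    _ = ∏ i : nonMultiples p m, pattCount (box2 (Nat.log p (m / i) + 1) n) (axial2 Ω Y) := by
        rw [image_rayPatterns hp hW, Nat.card_congr (Equiv.Set.univPi _), Nat.card_pi]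
        rfl
    _ = ∏ i ∈ nonMultiples p m, pattCount (box2 (Nat.log p (m / i) + 1) n) (axial2 Ω Y) :=
        Finset.prod_coe_sort (nonMultiples p m) fun i =>
          pattCount (box2 (Nat.log p (m / i) + 1) n) (axial2 Ω Y)

lemma log_pattCount_box2_axial2_mulSubshift [Finite A] (hp : 1 < p) (Ω Y : Set (ℕ → A))
    (m n : ℕ) : Real.log (pattCount (box2 m n) (axial2 (mulSubshift p Ω) Y)) =
      ∑ i ∈ nonMultiples p m,
        Real.log (pattCount (box2 (Nat.log p (m / i) + 1) n) (axial2 Ω Y)) := by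
  rcases (axial2 Ω Y).eq_empty_or_nonempty with hW | hW
  · have hp1 : ¬ p ∣ 1 := fun h => by have := Nat.le_of_dvd one_pos h; omega
    have hZ : axial2 (mulSubshift p Ω) Y = ∅ := Set.eq_empty_of_forall_notMem fun x hx =>
      (hW ▸ (mem_axial2_mulSubshift_iff hp).mp hx 1 one_pos hp1 : ray p 1 x ∈ (∅ : Set _))
    simp [hW, hZ, pattCount_empty]
  · rw [pattCount_box2_axial2_mulSubshift hp hW, Nat.cast_prod, Real.log_prod]
    exact fun i _ => Nat.cast_ne_zero.mpr (pattCount_pos hW).ne'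

end Rays

section Asymptotics

variable {p : ℕ}

lemma tendsto_natCast_div_div_natCast {q : ℕ} (hq : 0 < q) :
    Tendsto (fun m : ℕ => ((m / q : ℕ) : ℝ) / m) atTop (𝓝 (1 / q)) := by
  have hq' : (0 : ℝ) < q := by exact_mod_cast hq
  have h := (tendsto_nat_floor_div_atTop (R := ℝ)).comp
    (tendsto_natCast_atTop_atTop.atTop_div_const hq')
  convert h.div_const (q : ℝ) using 2 with m
  simp only [Function.comp, Nat.floor_div_eq_div]
  field_simp

lemma card_nonMultiples (p N : ℕ) : #(nonMultiples p N) = N - N / p := by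
  have h := card_filter_add_card_filter_not (s := Ioc 0 N) (p ∣ ·)
  rw [Nat.Ioc_filter_dvd_card_eq_div, Nat.card_Ioc] at h
  rw [nonMultiples]
  omega

lemma log_div_eq_iff (hp : 1 < p) {m i k : ℕ} (hi : 0 < i) (him : i ≤ m) :
    Nat.log p (m / i) = k ↔ m / p ^ (k + 1) < i ∧ i ≤ m / p ^ k := by
  have hpk : ∀ j, 0 < p ^ j := fun j => by positivity
  rw [Nat.log_eq_iff (Or.inr ⟨hp, (Nat.div_pos him hi).ne'⟩), Nat.le_div_iff_mul_le hi,
    Nat.div_lt_iff_lt_mul hi, Nat.div_lt_iff_lt_mul (hpk _), Nat.le_div_iff_mul_le (hpk _),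
    mul_comm i, mul_comm i, and_comm]

lemma filter_log_div_eq (hp : 1 < p) (m k : ℕ) :
    {i ∈ nonMultiples p m | Nat.log p (m / i) = k} =
      nonMultiples p (m / p ^ k) \ nonMultiples p (m / p ^ (k + 1)) := by
  ext i
  simp only [mem_filter, Finset.mem_sdiff, mem_nonMultiples]
  constructor
  · rintro ⟨⟨⟨hi0, him⟩, hd⟩, hk⟩
    obtain ⟨hlt, hle⟩ := (log_div_eq_iff hp hi0 him).mp hk
    exact ⟨⟨⟨hi0, hle⟩, hd⟩, fun h => by omega⟩
  · rintro ⟨⟨⟨hi0, hle⟩, hd⟩, hnot⟩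
    have him : i ≤ m := hle.trans (Nat.div_le_self _ _)
    refine ⟨⟨⟨hi0, him⟩, hd⟩, (log_div_eq_iff hp hi0 him).mpr ⟨?_, hle⟩⟩
    by_contra h
    exact hnot ⟨⟨hi0, by omega⟩, hd⟩

lemma natCast_card_filter_log_div_eq (hp : 1 < p) (m k : ℕ) :
    (#{i ∈ nonMultiples p m | Nat.log p (m / i) = k} : ℝ) =
      (m / p ^ k : ℕ) - 2 * (m / p ^ (k + 1) : ℕ) + (m / p ^ (k + 2) : ℕ) := by
  have hdiv : ∀ j, m / p ^ j / p = m / p ^ (j + 1) := fun j => by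
    rw [Nat.div_div_eq_div_mul, pow_succ]
  have hsub : nonMultiples p (m / p ^ (k + 1)) ⊆ nonMultiples p (m / p ^ k) := fun i hi => by
    rw [mem_nonMultiples] at hi ⊢
    exact ⟨⟨hi.1.1, hi.1.2.trans (hdiv k ▸ Nat.div_le_self _ _)⟩, hi.2⟩
  rw [filter_log_div_eq hp, card_sdiff_of_subset hsub, Nat.cast_sub (card_le_card hsub),
    card_nonMultiples, card_nonMultiples, hdiv, hdiv, Nat.cast_sub (hdiv k ▸ Nat.div_le_self _ _),
    Nat.cast_sub (hdiv (k + 1) ▸ Nat.div_le_self _ _)]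
  ring

lemma tendsto_card_filter_log_div_eq_div (hp : 1 < p) (k : ℕ) :
    Tendsto (fun m : ℕ => (#{i ∈ nonMultiples p m | Nat.log p (m / i) = k} : ℝ) / m) atTop
      (𝓝 (((p : ℝ) - 1) ^ 2 / p ^ 2 / p ^ k)) := by
  have h := fun j => tendsto_natCast_div_div_natCast (pow_pos (by omega : 0 < p) j)
  convert ((h k).sub ((h (k + 1)).const_mul 2)).add (h (k + 2)) using 1
  · funext m
    rw [natCast_card_filter_log_div_eq hp]
    ring
  · have hp0 : (p : ℝ) ≠ 0 := by positivity
    congr 1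
    push_cast
    field_simp
    ring

lemma natCast_card_filter_log_div_eq_le (hp : 1 < p) (m k : ℕ) :
    (#{i ∈ nonMultiples p m | Nat.log p (m / i) = k} : ℝ) ≤ (1 / p) ^ k * m := by
  have hcard : #{i ∈ nonMultiples p m | Nat.log p (m / i) = k} ≤ m / p ^ k := by
    rw [filter_log_div_eq hp]
    exact (card_le_card sdiff_subset).trans (card_nonMultiples p _ ▸ Nat.sub_le _ _)
  calc (#{i ∈ nonMultiples p m | Nat.log p (m / i) = k} : ℝ) ≤ ((m / p ^ k : ℕ) : ℝ) := by
        exact_mod_cast hcard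
    _ ≤ (m : ℝ) / (p ^ k : ℕ) := Nat.cast_div_le
    _ = (1 / p) ^ k * m := by push_cast; ring

lemma sum_comp_eq_tsum_card_mul {α : Type*} (s : Finset α) (g : α → ℕ) (f : ℕ → ℝ) :
    ∑ a ∈ s, f (g a) = ∑' k, (#{a ∈ s | g a = k} : ℝ) * f k := by
  classical
  rw [Finset.sum_comp, tsum_eq_sum (s := s.image g) fun k hk => ?_]
  · simp only [nsmul_eq_mul]
  · rw [card_eq_zero.mpr (filter_eq_empty_iff.mpr fun a ha (hga : g a = k) =>
      hk (hga ▸ mem_image_of_mem g ha)), Nat.cast_zero, zero_mul]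

lemma tendsto_sum_nonMultiples_div (hp : 1 < p) {u : ℕ → ℕ → ℝ} {lam : ℕ → ℝ} {L : ℝ}
    (hu : ∀ i n, |u i n| ≤ i * n * L)
    (hlam : ∀ i, Tendsto (fun n : ℕ => u i n / n) atTop (𝓝 (lam i))) :
    Tendsto (fun mn : ℕ × ℕ =>
        (∑ i ∈ nonMultiples p mn.1, u (Nat.log p (mn.1 / i) + 1) mn.2) / (mn.1 * mn.2))
      atTop (𝓝 ((((p : ℝ) - 1) ^ 2 / p ^ 2) * ∑' k, lam (k + 1) / p ^ k)) := by
  set c : ℕ → ℕ → ℝ := fun m k => #{i ∈ nonMultiples p m | Nat.log p (m / i) = k}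
  have hL : 0 ≤ L := by simpa using (abs_nonneg _).trans (hu 1 1)
  have hregroup : ∀ m n : ℕ, (∑ i ∈ nonMultiples p m, u (Nat.log p (m / i) + 1) n) / (m * n) =
      ∑' k, c m k / m * (u (k + 1) n / n) := fun m n => by
    rw [sum_comp_eq_tsum_card_mul _ (fun i => Nat.log p (m / i)) (fun k => u (k + 1) n),
      ← tsum_div_const]
    exact tsum_congr fun k => (div_mul_div_comm _ _ _ _).symm
  have hlimit : (((p : ℝ) - 1) ^ 2 / p ^ 2) * ∑' k, lam (k + 1) / p ^ k =
      ∑' k, ((p : ℝ) - 1) ^ 2 / p ^ 2 / p ^ k * lam (k + 1) := by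
    rw [← tsum_mul_left]
    exact tsum_congr fun k => by ring
  have hr : ‖(1 / p : ℝ)‖ < 1 := by
    rw [Real.norm_eq_abs, abs_of_pos (by positivity), div_lt_one (by positivity)]
    exact_mod_cast hp
  have hbound : Summable fun k : ℕ => (1 / p : ℝ) ^ k * ((k + 1) * L) :=
    (((summable_pow_mul_geometric_of_norm_lt_one 1 hr).add
      (summable_geometric_of_norm_lt_one hr)).mul_right L).congr fun k => by ring
  have hfst : Tendsto (Prod.fst : ℕ × ℕ → ℕ) atTop atTop := by
    rw [← prod_atTop_atTop_eq]
    exact tendsto_fst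
  have hsnd : Tendsto (Prod.snd : ℕ × ℕ → ℕ) atTop atTop := by
    rw [← prod_atTop_atTop_eq]
    exact tendsto_snd
  rw [hlimit]
  refine (tendsto_tsum_of_dominated_convergence hbound (fun k => ?_)
    (Eventually.of_forall fun mn k => ?_)).congr fun mn => (hregroup mn.1 mn.2).symm
  · exact ((tendsto_card_filter_log_div_eq_div hp k).comp hfst).mul ((hlam (k + 1)).comp hsnd)
  · rw [norm_mul, Real.norm_eq_abs, Real.norm_eq_abs, abs_div, abs_div, Nat.abs_cast,
      Nat.abs_cast, Nat.abs_cast]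
    exact mul_le_mul
      (div_le_of_le_mul₀ (Nat.cast_nonneg _) (by positivity)
        (natCast_card_filter_log_div_eq_le hp mn.1 k))
      (div_le_of_le_mul₀ (Nat.cast_nonneg _) (by positivity)
        ((hu _ _).trans_eq (by push_cast; ring)))
      (by positivity) (by positivity)

end Asymptotics

end MulSubshiftEntropy

open MulSubshiftEntropy in
theorem entropy_axialProd_mulSubshift_subshift_general
    {A : Type*} [Fintype A] [TopologicalSpace A]
    (p : ℕ) (hp : 2 ≤ p)
    (Ω X : Set (ℕ → A)) (hX : IsSubshift X) :
    ∃ lam : ℕ → ℝ,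
      (∀ i : ℕ, 1 ≤ i →
        Tendsto
          (fun j : ℕ => Real.log (pattCount (box2 i j) (axial2 Ω X)) / (j : ℝ))
          atTop (nhds (lam i))) ∧
      Tendsto
        (fun mn : ℕ × ℕ =>
          Real.log (pattCount (box2 mn.1 mn.2) (axial2 (mulSubshift p Ω) X)) /
            ((mn.1 : ℝ) * (mn.2 : ℝ)))
        atTop
        (nhds ((((p : ℝ) - 1) ^ 2 / (p : ℝ) ^ 2) *
          ∑' i : ℕ, lam (i + 1) / (p : ℝ) ^ i)) := by
  have hsub := subadditive_log_pattCount_axial2 Ω hX.2.2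
  have hlam : ∀ i, Tendsto (fun n : ℕ => Real.log (pattCount (box2 i n) (axial2 Ω X)) / n)
      atTop (nhds (hsub i).lim) := fun i =>
    (hsub i).tendsto_lim ⟨0, by
      rintro _ ⟨n, rfl⟩
      exact div_nonneg (Real.log_natCast_nonneg _) n.cast_nonneg⟩
  refine ⟨fun i => (hsub i).lim, fun i _ => hlam i, ?_⟩
  simp_rw [log_pattCount_box2_axial2_mulSubshift hp]
  exact tendsto_sum_nonMultiples_div hp (fun i n => abs_log_pattCount_box2_le i n _) hlam

/-- Theorem 2.2: the limits `λ_i = lim_j (1/j) log|P([1,i]×[1,j], Ω ⊗ X)|` exist, the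
entropy of `X_Ω^p ⊗ X` on `ℕ²` exists, and it equals `((p−1)²/p²) Σ_{i≥1} λ_i / p^{i−1}`. -/
theorem entropy_axialProd_mulSubshift_subshift
    {A : Type*} [Fintype A] [TopologicalSpace A] [DiscreteTopology A]
    (p : ℕ) (hp : 2 ≤ p)
    (Ω X : Set (ℕ → A)) (hΩ : IsSubshift Ω) (hX : IsSubshift X) :
    ∃ lam : ℕ → ℝ,
      (∀ i : ℕ, 1 ≤ i →
        Tendsto
          (fun j : ℕ => Real.log (pattCount (box2 i j) (axial2 Ω X)) / (j : ℝ))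
          atTop (nhds (lam i))) ∧
      Tendsto
        (fun mn : ℕ × ℕ =>
          Real.log (pattCount (box2 mn.1 mn.2) (axial2 (mulSubshift p Ω) X)) /
            ((mn.1 : ℝ) * (mn.2 : ℝ)))
        atTop
        (nhds ((((p : ℝ) - 1) ^ 2 / (p : ℝ) ^ 2) *
          ∑' i : ℕ, lam (i + 1) / (p : ℝ) ^ i)) :=
  entropy_axialProd_mulSubshift_subshift_general p hp Ω X hX
end

section
/- For all integers p1, p2 with 2 ≤ p1 ≤ p2 and every n ≥ 1, the number of compositions of n with all parts in {1} ∪ {p2^k : k ≥ 1} is at most the number of compositions of n with all parts in {1} ∪ {p1^k : k ≥ 1}; that is, |P_{p2}(n)| ≤ |P_{p1}(n)|. -/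
/-- Compositions of `n` (ordered tuples of positive integers summing to `n`,
encoded as lists) all of whose parts lie in `{1} ∪ {p^k : k ≥ 1}`. -/
def compPow (p n : ℕ) : Set (List ℕ) :=
  {l | l.sum = n ∧ ∀ a ∈ l, a = 1 ∨ ∃ k, 1 ≤ k ∧ a = p ^ k}

/-- The set `{p^k − 1 : k ≥ 1}`. -/
def partsPm1 (p : ℕ) : Set ℕ := {a | ∃ k, 1 ≤ k ∧ a = p ^ k - 1}

/-- Compositions of `n` whose parts alternate between `{p1^k − 1 : k ≥ 1}` and
`{p2^k − 1 : k ≥ 1}` (starting with either set). -/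
def altComp (p1 p2 n : ℕ) : Set (List ℕ) :=
  {l | l.sum = n ∧
    ((∀ t, t < l.length →
        (t % 2 = 0 → l.getD t 0 ∈ partsPm1 p1) ∧ (t % 2 = 1 → l.getD t 0 ∈ partsPm1 p2)) ∨
     (∀ t, t < l.length →
        (t % 2 = 0 → l.getD t 0 ∈ partsPm1 p2) ∧ (t % 2 = 1 → l.getD t 0 ∈ partsPm1 p1)))}

/-- Compositions of `n` all of whose parts lie in `{1, 2} ∪ {2k : k ≥ 2}`. -/
def compA (n : ℕ) : Set (List ℕ) :=
  {l | l.sum = n ∧ ∀ a ∈ l, a = 1 ∨ a = 2 ∨ ∃ k, 2 ≤ k ∧ a = 2 * k}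

/-!
Writing each part `p₂ ^ k` of a composition in `P_{p₂}(n)` as the block
`p₁ ^ k, 1, …, 1` of total `p₂ ^ k` gives a composition in `P_{p₁}(n)`. The first entry `p₁ ^ k`
of each block determines `k`, so the resulting list can be cut back into blocks uniquely and the
map is injective.
-/

theorem List.injOn_flatMap_cons {α β : Type*} {g : α → β} {t : α → List β} {s : Set α}
    (hg : Set.InjOn g s) :
    Set.InjOn (fun l : List α => l.flatMap fun a => g a :: t a) {l | ∀ a ∈ l, a ∈ s} := by
  intro l hl m hm hlm
  induction l generalizing m with
  | nil => cases m <;> simp_all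
  | cons a l ih =>
    cases m with
    | nil => simp at hlm
    | cons b m =>
      simp only [List.flatMap_cons, List.cons_append, List.cons.injEq] at hlm
      obtain ⟨hhead, htail⟩ := hlm
      obtain rfl : a = b := hg (hl a (by simp)) (hm b (by simp)) hhead
      rw [ih (fun x hx => hl x (by simp [hx])) (fun x hx => hm x (by simp [hx]))
        (List.append_cancel_left htail)]

theorem one_or_pow_iff_exists_pow {p a : ℕ} :
    (a = 1 ∨ ∃ k, 1 ≤ k ∧ a = p ^ k) ↔ ∃ k, a = p ^ k := by
  constructor
  · rintro (rfl | ⟨k, -, rfl⟩)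
    exacts [⟨0, rfl⟩, ⟨k, rfl⟩]
  · rintro ⟨_ | k, rfl⟩
    exacts [Or.inl rfl, Or.inr ⟨k + 1, by omega, rfl⟩]

theorem compPow_eq (p n : ℕ) : compPow p n = {l | l.sum = n ∧ ∀ a ∈ l, ∃ k, a = p ^ k} := by
  simp only [compPow, one_or_pow_iff_exists_pow]

theorem compPow_finite {p : ℕ} (hp : 0 < p) (n : ℕ) : (compPow p n).Finite := by
  refine (Set.finite_range (Composition.blocks (n := n))).subset ?_
  rintro l ⟨hsum, hparts⟩
  have hpos : ∀ a ∈ l, 0 < a := fun a ha => by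
    obtain ⟨k, rfl⟩ := one_or_pow_iff_exists_pow.1 (hparts a ha)
    positivity
  exact ⟨⟨l, hpos _, hsum⟩, rfl⟩

/-- For `a = p₂ ^ k` this is the block `p₁ ^ k, 1, …, 1` of sum `p₂ ^ k` (when `p₁ ≤ p₂`). -/
def expandPart (p₁ p₂ a : ℕ) : List ℕ :=
  p₁ ^ Nat.log p₂ a :: List.replicate (a - p₁ ^ Nat.log p₂ a) 1

def expand (p₁ p₂ : ℕ) (l : List ℕ) : List ℕ :=
  l.flatMap (expandPart p₁ p₂)

theorem expandPart_pow {p₁ p₂ : ℕ} (hp₂ : 1 < p₂) (k : ℕ) :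
    expandPart p₁ p₂ (p₂ ^ k) = p₁ ^ k :: List.replicate (p₂ ^ k - p₁ ^ k) 1 := by
  rw [expandPart, Nat.log_pow hp₂]

theorem sum_expandPart_pow {p₁ p₂ : ℕ} (hp₂ : 1 < p₂) (hle : p₁ ≤ p₂) (k : ℕ) :
    (expandPart p₁ p₂ (p₂ ^ k)).sum = p₂ ^ k := by
  have : p₁ ^ k ≤ p₂ ^ k := Nat.pow_le_pow_left hle k
  simp only [expandPart_pow hp₂, List.sum_cons, List.sum_replicate, smul_eq_mul, mul_one]
  omega

theorem expand_mem_compPow {p₁ p₂ n : ℕ} (hp₂ : 1 < p₂) (hle : p₁ ≤ p₂) {l : List ℕ}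
    (hl : l ∈ compPow p₂ n) : expand p₁ p₂ l ∈ compPow p₁ n := by
  rw [compPow_eq] at hl ⊢
  obtain ⟨hsum, hparts⟩ := hl
  refine ⟨?_, fun b hb => ?_⟩
  · rw [← hsum, expand, List.flatMap_def, List.sum_flatten, List.map_map]
    congr 1
    refine (List.map_congr_left fun a ha => ?_).trans l.map_id
    obtain ⟨k, rfl⟩ := hparts a ha
    exact sum_expandPart_pow hp₂ hle k
  · obtain ⟨a, ha, hb⟩ := List.mem_flatMap.1 hb
    obtain ⟨k, rfl⟩ := hparts a ha
    rw [expandPart_pow hp₂] at hb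
    rcases List.mem_cons.1 hb with rfl | hb
    · exact ⟨k, rfl⟩
    · exact ⟨0, List.eq_of_mem_replicate hb⟩

theorem expand_injOn {p₁ p₂ : ℕ} (hp₁ : 1 < p₁) (hp₂ : 1 < p₂) (n : ℕ) :
    Set.InjOn (expand p₁ p₂) (compPow p₂ n) := by
  have hg : Set.InjOn (fun a => p₁ ^ Nat.log p₂ a) {a | ∃ k, a = p₂ ^ k} := by
    rintro _ ⟨i, rfl⟩ _ ⟨j, rfl⟩ hij
    simp only [Nat.log_pow hp₂] at hij
    rw [Nat.pow_right_injective hp₁ hij]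
  rw [compPow_eq]
  exact (List.injOn_flatMap_cons hg).mono fun l hl => hl.2

theorem card_compPow_antitone_general (p1 p2 n : ℕ) (hp1 : 2 ≤ p1) (hle : p1 ≤ p2) :
    Nat.card (compPow p2 n) ≤ Nat.card (compPow p1 n) :=
  have hp2 : 1 < p2 := by omega
  Set.ncard_le_ncard_of_injOn (expand p1 p2) (fun _ hl => expand_mem_compPow hp2 hle hl)
    (expand_injOn hp1 hp2 n) (compPow_finite (by omega) n)

/-- For `2 ≤ p1 ≤ p2` and `n ≥ 1`, `|P_{p2}(n)| ≤ |P_{p1}(n)|`. -/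
theorem card_compPow_antitone (p1 p2 n : ℕ) (hp1 : 2 ≤ p1) (hle : p1 ≤ p2) (hn : 1 ≤ n) :
    Nat.card (compPow p2 n) ≤ Nat.card (compPow p1 n) :=
  card_compPow_antitone_general p1 p2 n hp1 hle
end

section
/- For all integers p1, p2 ≥ 2 and every n ≥ 1, |P_{p1,p2}(n)| ≤ |P_2(n)|; that is, the number of compositions of n whose parts alternate between the sets {p1^k − 1 : k ≥ 1} and {p2^k − 1 : k ≥ 1} is at most the number of compositions of n all of whose parts are powers of 2. -/
open Finset

def IsAlternating (p q : ℕ) : List ℕ → Prop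
  | [] => True
  | a :: l => a ∈ partsPm1 p ∧ IsAlternating q p l

lemma isAlternating_iff_getD (p q : ℕ) (l : List ℕ) :
    IsAlternating p q l ↔ ∀ t, t < l.length →
      (t % 2 = 0 → l.getD t 0 ∈ partsPm1 p) ∧ (t % 2 = 1 → l.getD t 0 ∈ partsPm1 q) := by
  induction l generalizing p q with
  | nil => simp [IsAlternating]
  | cons a l ih =>
    simp only [IsAlternating, ih, List.length_cons]
    constructor
    · rintro ⟨ha, hl⟩ (_ | t) ht
      · simpa using ha
      · have := hl t (by omega)
        simp only [List.getD_cons_succ]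
        exact ⟨fun h => this.2 (by omega), fun h => this.1 (by omega)⟩
    · intro h
      refine ⟨by simpa using (h 0 (by omega)).1 rfl, fun t ht => ?_⟩
      have := h (t + 1) (by omega)
      simp only [List.getD_cons_succ] at this
      exact ⟨fun h => this.2 (by omega), fun h => this.1 (by omega)⟩

def altCompFrom (p q n : ℕ) : Set (List ℕ) := {l | l.sum = n ∧ IsAlternating p q l}

lemma altComp_eq_union (p1 p2 n : ℕ) :
    altComp p1 p2 n = altCompFrom p1 p2 n ∪ altCompFrom p2 p1 n := by
  ext l
  simp only [altComp, altCompFrom, isAlternating_iff_getD, Set.mem_union, Set.mem_ofPred_eq]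
  tauto

lemma pos_of_mem_partsPm1 {p a : ℕ} (hp : 2 ≤ p) (ha : a ∈ partsPm1 p) : 0 < a := by
  obtain ⟨k, hk, rfl⟩ := ha
  have := Nat.one_lt_pow (by omega : k ≠ 0) hp
  omega

lemma IsAlternating.pos {p q : ℕ} (hp : 2 ≤ p) (hq : 2 ≤ q) {l : List ℕ}
    (hl : IsAlternating p q l) : ∀ a ∈ l, 0 < a := by
  induction l generalizing p q with
  | nil => simp
  | cons a l ih =>
    rintro b (_ | ⟨_, hb⟩)
    · exact pos_of_mem_partsPm1 hp hl.1
    · exact ih hq hp hl.2 b hb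

lemma finite_setOf_sum_eq_of_pos (n : ℕ) :
    {l : List ℕ | l.sum = n ∧ ∀ a ∈ l, 0 < a}.Finite :=
  (Set.finite_range (Composition.blocks (n := n))).subset
    fun l ⟨hsum, hpos⟩ => ⟨⟨l, hpos _, hsum⟩, rfl⟩

lemma altCompFrom_finite {p q : ℕ} (hp : 2 ≤ p) (hq : 2 ≤ q) (n : ℕ) :
    (altCompFrom p q n).Finite :=
  (finite_setOf_sum_eq_of_pos n).subset fun _ ⟨hsum, hl⟩ => ⟨hsum, hl.pos hp hq⟩

lemma altCompFrom_zero {p q : ℕ} (hp : 2 ≤ p) (hq : 2 ≤ q) : altCompFrom p q 0 = {[]} := by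
  ext l
  refine ⟨fun ⟨hsum, hl⟩ => ?_, by rintro rfl; exact ⟨rfl, trivial⟩⟩
  have := hl.pos hp hq
  cases l with
  | nil => rfl
  | cons a l =>
    have := this a List.mem_cons_self
    simp only [List.sum_cons] at hsum
    omega

lemma compPow_two_finite (n : ℕ) : (compPow 2 n).Finite := by
  refine (finite_setOf_sum_eq_of_pos n).subset fun l ⟨hsum, hl⟩ => ⟨hsum, fun a ha => ?_⟩
  rcases hl a ha with rfl | ⟨k, -, rfl⟩
  · exact one_pos
  · exact Nat.two_pow_pos k

lemma ncard_compPow_two_pos (n : ℕ) : 0 < (compPow 2 n).ncard :=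
  (Set.ncard_pos (compPow_two_finite n)).mpr
    ⟨List.replicate n 1, by simp, fun a ha => .inl (List.eq_of_mem_replicate ha)⟩

lemma sum_ncard_compPow_two_sub_pow_le {N : ℕ} {s : Finset ℕ} (hs : ∀ e ∈ s, 2 ^ e ≤ N) :
    ∑ e ∈ s, (compPow 2 (N - 2 ^ e)).ncard ≤ (compPow 2 N).ncard := by
  have hdisj : (s : Set ℕ).PairwiseDisjoint
      fun e => List.cons (2 ^ e) '' compPow 2 (N - 2 ^ e) := by
    intro i _ j _ hij
    refine Set.disjoint_left.mpr ?_
    rintro _ ⟨l, -, rfl⟩ ⟨l', -, h⟩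
    exact hij (Nat.pow_right_injective le_rfl (List.cons_eq_cons.mp h).1).symm
  have hsub : ⋃ e ∈ (s : Set ℕ), List.cons (2 ^ e) '' compPow 2 (N - 2 ^ e) ⊆ compPow 2 N := by
    refine Set.iUnion₂_subset fun e he => ?_
    rintro _ ⟨l, ⟨hsum, hl⟩, rfl⟩
    refine ⟨by simp [hsum, hs e he], ?_⟩
    rintro a (_ | ⟨_, ha⟩)
    · rcases e with _ | k
      · exact .inl rfl
      · exact .inr ⟨k + 1, by omega, rfl⟩
    · exact hl a ha
  calc ∑ e ∈ s, (compPow 2 (N - 2 ^ e)).ncard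
      = ∑ e ∈ s, (List.cons (2 ^ e) '' compPow 2 (N - 2 ^ e)).ncard := by
        simp only [Set.ncard_image_of_injective _ List.cons_injective]
    _ = (⋃ e ∈ (s : Set ℕ), List.cons (2 ^ e) '' compPow 2 (N - 2 ^ e)).ncard := by
        rw [s.finite_toSet.ncard_biUnion (fun e _ => (compPow_two_finite _).image _) hdisj,
          finsum_mem_coe_finset]
    _ ≤ (compPow 2 N).ncard := Set.ncard_le_ncard hsub (compPow_two_finite N)

lemma ncard_compPow_two_mono : Monotone fun n => (compPow 2 n).ncard :=
  monotone_nat_of_le_succ fun n => by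
    simpa using sum_ncard_compPow_two_sub_pow_le (N := n + 1) (s := {0}) (by simp)

def partExponents (p m : ℕ) : Finset ℕ := (Icc 1 m).filter fun k => p ^ k ≤ m + 1

lemma mem_partExponents {p m k : ℕ} (hp : 2 ≤ p) :
    k ∈ partExponents p m ↔ 1 ≤ k ∧ p ^ k ≤ m + 1 := by
  have := Nat.lt_pow_self (n := k) hp
  simp only [partExponents, mem_filter, mem_Icc]
  omega

lemma altCompFrom_subset_biUnion {p q m : ℕ} (hp : 2 ≤ p) (hm : 0 < m) :
    altCompFrom p q m ⊆
      ⋃ k ∈ partExponents p m, List.cons (p ^ k - 1) '' altCompFrom q p (m + 1 - p ^ k) := by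
  rintro (_ | ⟨a, l⟩) ⟨hsum, hl⟩
  · simp only [List.sum_nil] at hsum; omega
  obtain ⟨⟨k, hk, rfl⟩, hl⟩ := hl
  have : 0 < p ^ k := by positivity
  simp only [List.sum_cons] at hsum
  exact Set.mem_biUnion ((mem_partExponents hp).mpr ⟨hk, by omega⟩) ⟨l, ⟨by omega, hl⟩, rfl⟩

lemma ncard_altCompFrom_le_sum {p q m : ℕ} (hp : 2 ≤ p) (hq : 2 ≤ q) (hm : 0 < m) :
    (altCompFrom p q m).ncard ≤
      ∑ k ∈ partExponents p m, (altCompFrom q p (m + 1 - p ^ k)).ncard := by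
  have hfin : (⋃ k ∈ partExponents p m,
      List.cons (p ^ k - 1) '' altCompFrom q p (m + 1 - p ^ k)).Finite :=
    (partExponents p m).finite_toSet.biUnion fun _ _ => (altCompFrom_finite hq hp _).image _
  calc (altCompFrom p q m).ncard
      ≤ (⋃ k ∈ partExponents p m,
          List.cons (p ^ k - 1) '' altCompFrom q p (m + 1 - p ^ k)).ncard :=
        Set.ncard_le_ncard (altCompFrom_subset_biUnion hp hm) hfin
    _ ≤ ∑ k ∈ partExponents p m,
          (List.cons (p ^ k - 1) '' altCompFrom q p (m + 1 - p ^ k)).ncard :=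
        Finset.set_ncard_biUnion_le _ _
    _ = ∑ k ∈ partExponents p m, (altCompFrom q p (m + 1 - p ^ k)).ncard := by
        simp only [Set.ncard_image_of_injective _ List.cons_injective]

lemma sum_ncard_compPow_two_sub_le_pred {p : ℕ} (hp : 2 ≤ p) (m : ℕ) :
    ∑ k ∈ partExponents p m, (compPow 2 (m - p ^ k)).ncard ≤ (compPow 2 (m - 1)).ncard := by
  have hbound : ∀ k ∈ partExponents p m, 1 ≤ k ∧ 2 * 2 ^ (k - 1) ≤ p ^ k ∧ p ^ k ≤ m + 1 := by
    intro k hk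
    obtain ⟨hk, hkm⟩ := (mem_partExponents hp).mp hk
    rw [← pow_succ', Nat.sub_add_cancel hk]
    exact ⟨hk, Nat.pow_le_pow_left hp k, hkm⟩
  rcases Nat.lt_or_ge m 2 with hm | hm
  · have hsub : partExponents p m ⊆ {1} := fun k hk => by
      have := hbound k hk
      have := Nat.lt_pow_self (n := k) hp
      simp only [mem_singleton]
      omega
    calc _ ≤ ∑ k ∈ {1}, (compPow 2 (m - p ^ k)).ncard := sum_le_sum_of_subset hsub
      _ = (compPow 2 (m - 1)).ncard := by
        rw [sum_singleton, pow_one, show m - p = m - 1 by omega]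
  calc _ ≤ ∑ k ∈ partExponents p m, (compPow 2 (m - 1 - 2 ^ (k - 1))).ncard :=
        sum_le_sum fun k hk => ncard_compPow_two_mono <| by
          have := hbound k hk
          have := Nat.one_le_two_pow (n := k - 1)
          omega
    _ = ∑ e ∈ (partExponents p m).image (· - 1), (compPow 2 (m - 1 - 2 ^ e)).ncard := by
        rw [sum_image fun i hi j hj hij => by
          have := hbound i hi; have := hbound j hj; omega]
    _ ≤ (compPow 2 (m - 1)).ncard := sum_ncard_compPow_two_sub_pow_le fun e he => by
        obtain ⟨k, hk, rfl⟩ := mem_image.mp he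
        have := hbound k hk
        rcases (Nat.one_le_two_pow (n := k - 1)).eq_or_lt with h | h <;> omega

lemma ncard_altCompFrom_le_pred {p q : ℕ} (hp : 2 ≤ p) (hq : 2 ≤ q) (m : ℕ) :
    (altCompFrom p q m).ncard ≤ (compPow 2 (m - 1)).ncard := by
  induction m using Nat.strong_induction_on generalizing p q with
  | _ m ih =>
  rcases Nat.eq_zero_or_pos m with rfl | hm
  · rw [altCompFrom_zero hp hq, Set.ncard_singleton]
    exact ncard_compPow_two_pos _
  calc (altCompFrom p q m).ncard
      ≤ ∑ k ∈ partExponents p m, (altCompFrom q p (m + 1 - p ^ k)).ncard :=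
        ncard_altCompFrom_le_sum hp hq hm
    _ ≤ ∑ k ∈ partExponents p m, (compPow 2 (m - p ^ k)).ncard := sum_le_sum fun k hk => by
        obtain ⟨hk, hkm⟩ := (mem_partExponents hp).mp hk
        have := Nat.one_lt_pow (by omega : k ≠ 0) hp
        have := ih (m + 1 - p ^ k) (by omega) hq hp
        rwa [show m + 1 - p ^ k - 1 = m - p ^ k by omega] at this
    _ ≤ (compPow 2 (m - 1)).ncard := sum_ncard_compPow_two_sub_le_pred hp m

lemma ncard_altCompFrom_add_ncard_altCompFrom_le {p q n : ℕ} (hp : 2 ≤ p) (hq : 3 ≤ q)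
    (hn : 0 < n) :
    (altCompFrom p q n).ncard + (altCompFrom q p n).ncard ≤ (compPow 2 n).ncard := by
  have hbound : ∀ j ∈ partExponents q n, 1 ≤ j ∧ 2 ^ j < q ^ j ∧ q ^ j ≤ n + 1 := fun j hj => by
    obtain ⟨hj, hjn⟩ := (mem_partExponents (by omega)).mp hj
    exact ⟨hj, Nat.pow_lt_pow_left (by omega) (by omega), hjn⟩
  have h0 : 0 ∉ partExponents q n := fun h => by have := hbound 0 h; omega
  have hq_start : (altCompFrom q p n).ncard ≤
      ∑ j ∈ partExponents q n, (compPow 2 (n - 2 ^ j)).ncard :=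
    calc (altCompFrom q p n).ncard
        ≤ ∑ j ∈ partExponents q n, (altCompFrom p q (n + 1 - q ^ j)).ncard :=
          ncard_altCompFrom_le_sum (by omega) hp hn
      _ ≤ ∑ j ∈ partExponents q n, (compPow 2 (n - 2 ^ j)).ncard := sum_le_sum fun j hj =>
          (ncard_altCompFrom_le_pred hp (by omega) _).trans
            (ncard_compPow_two_mono (by have := hbound j hj; omega))
  calc (altCompFrom p q n).ncard + (altCompFrom q p n).ncard
      ≤ (compPow 2 (n - 2 ^ 0)).ncard + ∑ j ∈ partExponents q n, (compPow 2 (n - 2 ^ j)).ncard :=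
        add_le_add (ncard_altCompFrom_le_pred hp (by omega) n) hq_start
    _ = ∑ e ∈ insert 0 (partExponents q n), (compPow 2 (n - 2 ^ e)).ncard := by
        rw [sum_insert h0]
    _ ≤ (compPow 2 n).ncard := sum_ncard_compPow_two_sub_pow_le fun e he => by
        rcases mem_insert.mp he with rfl | he
        · rw [pow_zero]; exact hn
        · have := hbound e he; omega

/-- For `p1, p2 ≥ 2` and `n ≥ 1`, `|P_{p1,p2}(n)| ≤ |P_2(n)|`. -/
theorem card_altComp_le_card_compPow_two (p1 p2 n : ℕ) (hp1 : 2 ≤ p1) (hp2 : 2 ≤ p2)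
    (hn : 1 ≤ n) :
    Nat.card (altComp p1 p2 n) ≤ Nat.card (compPow 2 n) := by
  rw [Nat.card_coe_set_eq, Nat.card_coe_set_eq, altComp_eq_union]
  obtain ⟨rfl, rfl⟩ | hp2' | hp1' : (p1 = 2 ∧ p2 = 2) ∨ 3 ≤ p2 ∨ 3 ≤ p1 := by omega
  · rw [Set.union_self]
    exact (ncard_altCompFrom_le_pred le_rfl le_rfl n).trans (ncard_compPow_two_mono (by omega))
  · exact (Set.ncard_union_le _ _).trans (ncard_altCompFrom_add_ncard_altCompFrom_le hp1 hp2' hn)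
  · rw [Set.union_comm]
    exact (Set.ncard_union_le _ _).trans (ncard_altCompFrom_add_ncard_altCompFrom_le hp2 hp1' hn)
end

section
/- Let a(n) be the number of compositions of n with all parts in {1, 2} ∪ {2k : k ≥ 2}. Then a(n) = O(B^n): there exists a constant C > 0 such that a(n) ≤ C · B^n for all n ≥ 1, where B = 1/|x0| ≈ 1.80193 and x0 ≈ 0.55496 is the root of smallest absolute value of the polynomial x³ − 2x² − x + 1. -/
/-!
Splitting a composition into its first part `s` and the rest shows: if the weights `t ^ s` of
the allowed parts sum to at most `1`, then `a(n) * t ^ n ≤ 1` for every `n`. The allowed parts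
are `1` and the positive even numbers, whose weights sum to at most `t + t² / (1 - t²)`, and this
is `≤ 1` exactly when `t³ - 2t² - t + 1 ≥ 0`. The cubic decreases on `[0, 1]` and has a root
`y ∈ [0, 1)`, so by minimality `t = |x0| ≤ y` satisfies this, and `C = 1` works.
-/

open Finset

def compositionsWith (P : ℕ → Prop) [DecidablePred P] : ℕ → Finset (List ℕ)
  | 0 => {[]}
  | n + 1 => ((Icc 1 (n + 1)).filter P).attach.biUnion
      fun s => (compositionsWith P (n + 1 - s)).image (s.1 :: ·)
decreasing_by have := (mem_Icc.1 (mem_filter.1 s.2).1).1; omega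

section compositionsWith

variable {P : ℕ → Prop} [DecidablePred P]

theorem mem_compositionsWith {n : ℕ} {l : List ℕ} :
    l ∈ compositionsWith P n ↔ l.sum = n ∧ ∀ a ∈ l, 0 < a ∧ P a := by
  induction n using Nat.strong_induction_on generalizing l with
  | _ n ih =>
  match n, l with
  | 0, [] => simp [compositionsWith]
  | 0, a :: l => simp [compositionsWith]; omega
  | n + 1, [] => simp [compositionsWith]
  | n + 1, a :: l =>
    simp only [compositionsWith, mem_biUnion, mem_attach, mem_image, true_and, Subtype.exists,
      mem_filter, mem_Icc, List.cons.injEq, List.sum_cons, List.forall_mem_cons]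
    constructor
    · rintro ⟨s, ⟨⟨hs1, hsn⟩, hs⟩, m, hm, rfl, rfl⟩
      rw [ih _ (by omega)] at hm
      exact ⟨by omega, ⟨hs1, hs⟩, hm.2⟩
    · rintro ⟨hsum, ⟨ha, hPa⟩, hl⟩
      exact ⟨a, ⟨⟨ha, by omega⟩, hPa⟩, l, (ih _ (by omega)).2 ⟨by omega, hl⟩, rfl, rfl⟩

theorem card_compositionsWith_mul_pow_le_one {R : Type*} [CommSemiring R] [PartialOrder R]
    [IsOrderedRing R] {t : R} (ht : 0 ≤ t) (hP : ∀ n, ∑ s ∈ (Icc 1 n).filter P, t ^ s ≤ 1)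
    (n : ℕ) : #(compositionsWith P n) * t ^ n ≤ 1 := by
  induction n using Nat.strong_induction_on with
  | _ n ih =>
  match n with
  | 0 => simp [compositionsWith]
  | n + 1 =>
    calc (#(compositionsWith P (n + 1)) : R) * t ^ (n + 1)
        ≤ (∑ s ∈ ((Icc 1 (n + 1)).filter P).attach, #(compositionsWith P (n + 1 - s))) *
            t ^ (n + 1) := by
          gcongr
          rw [compositionsWith]
          exact_mod_cast card_biUnion_le.trans (sum_le_sum fun _ _ => card_image_le)
      _ = ∑ s ∈ ((Icc 1 (n + 1)).filter P).attach,
            #(compositionsWith P (n + 1 - s)) * t ^ (n + 1 - s) * t ^ s.1 := by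
          rw [Nat.cast_sum, sum_mul]
          refine sum_congr rfl fun s _ => ?_
          rw [mul_assoc, ← pow_add, Nat.sub_add_cancel (mem_Icc.1 (mem_filter.1 s.2).1).2]
      _ ≤ ∑ s ∈ ((Icc 1 (n + 1)).filter P).attach, t ^ s.1 := by
          gcongr with s
          exact mul_le_of_le_one_left (pow_nonneg ht _)
            (ih _ (by have := (mem_Icc.1 (mem_filter.1 s.2).1).1; omega))
      _ ≤ 1 := by rw [sum_attach _ (t ^ ·)]; exact hP _

end compositionsWith

section parts

variable {K : Type*} [Field K] [LinearOrder K] [IsStrictOrderedRing K] {t : K}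

theorem sum_filter_one_or_even_pow_le (h0 : 0 ≤ t) (h1 : t < 1) (n : ℕ) :
    ∑ s ∈ (Icc 1 n).filter (fun a => a = 1 ∨ Even a), t ^ s ≤ t + t ^ 2 / (1 - t ^ 2) := by
  have hsub : (Icc 1 n).filter (fun a => a = 1 ∨ Even a) ⊆ insert 1 ((Ico 1 n).image (2 * ·)) := by
    intro s hs
    simp only [mem_filter, mem_Icc] at hs
    simp only [mem_insert, mem_image, mem_Ico]
    rcases hs with ⟨⟨hs1, hsn⟩, rfl | ⟨i, rfl⟩⟩
    · exact .inl rfl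
    · exact .inr ⟨i, ⟨by omega, by omega⟩, by ring⟩
  have h1_notMem : 1 ∉ (Ico 1 n).image (2 * ·) := by simp
  calc ∑ s ∈ (Icc 1 n).filter (fun a => a = 1 ∨ Even a), t ^ s
      ≤ ∑ s ∈ insert 1 ((Ico 1 n).image (2 * ·)), t ^ s :=
        sum_le_sum_of_subset_of_nonneg hsub fun _ _ _ => pow_nonneg h0 _
    _ = t + ∑ i ∈ Ico 1 n, (t ^ 2) ^ i := by
        rw [sum_insert h1_notMem, sum_image fun _ _ _ _ h => by omega, pow_one]
        simp only [pow_mul]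
    _ ≤ t + t ^ 2 / (1 - t ^ 2) := by
        gcongr
        simpa using geom_sum_Ico_le_of_lt_one (m := 1) (n := n) (sq_nonneg t) (by nlinarith)

theorem add_sq_div_one_sub_sq_le_one (h0 : 0 ≤ t) (h1 : t < 1)
    (hq : 0 ≤ t ^ 3 - 2 * t ^ 2 - t + 1) : t + t ^ 2 / (1 - t ^ 2) ≤ 1 := by
  have : 0 < 1 - t ^ 2 := by nlinarith
  rw [← le_sub_iff_add_le', div_le_iff₀ this]
  nlinarith

end parts

theorem antitoneOn_cubic : AntitoneOn (fun x : ℝ => x ^ 3 - 2 * x ^ 2 - x + 1) (Set.Icc 0 1) := by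
  rintro a ⟨ha0, ha1⟩ b ⟨hb0, hb1⟩ hab
  nlinarith [mul_nonneg (sub_nonneg.2 hab) (mul_nonneg ha0 (sub_nonneg.2 ha1)),
    mul_nonneg (sub_nonneg.2 hab) (mul_nonneg ha0 (sub_nonneg.2 hb1)),
    mul_nonneg (sub_nonneg.2 hab) (mul_nonneg hb0 (sub_nonneg.2 hb1))]

theorem exists_cubic_root_mem_Ico : ∃ y ∈ Set.Ico (0 : ℝ) 1, y ^ 3 - 2 * y ^ 2 - y + 1 = 0 := by
  have hcont : ContinuousOn (fun x : ℝ => x ^ 3 - 2 * x ^ 2 - x + 1) (Set.Icc 0 1) := by fun_prop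
  obtain ⟨y, hy, hy0⟩ := intermediate_value_Icc' zero_le_one hcont (show (0 : ℝ) ∈ _ by norm_num)
  refine ⟨y, ⟨hy.1, lt_of_le_of_ne hy.2 ?_⟩, hy0⟩
  rintro rfl
  norm_num at hy0

theorem compA_eq_compositionsWith (n : ℕ) :
    compA n = compositionsWith (fun a => a = 1 ∨ Even a) n := by
  ext l
  simp only [compA, Set.mem_ofPred_eq, mem_coe, mem_compositionsWith, and_congr_right_iff]
  intro
  refine forall₂_congr fun a _ => ⟨?_, ?_⟩
  · rintro (rfl | rfl | ⟨k, hk, rfl⟩) <;> simp; omega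
  · rintro ⟨ha, rfl | ⟨k, rfl⟩⟩
    · exact .inl rfl
    · exact .inr (if hk : k = 1 then .inl (by omega) else .inr ⟨k, by omega, by ring⟩)

/-- `a(n) = O(B^n)` where `B = 1/|x0|` and `x0` is the root of `x³ − 2x² − x + 1`
of smallest absolute value. -/
theorem compA_card_isBigO (x0 : ℝ)
    (hroot : x0 ^ 3 - 2 * x0 ^ 2 - x0 + 1 = 0)
    (hmin : ∀ y : ℝ, y ^ 3 - 2 * y ^ 2 - y + 1 = 0 → |x0| ≤ |y|) :
    ∃ C : ℝ, 0 < C ∧ ∀ n : ℕ, 1 ≤ n →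
      (Nat.card (compA n) : ℝ) ≤ C * (1 / |x0|) ^ n := by
  obtain ⟨y, ⟨hy0, hy1⟩, hy⟩ := exists_cubic_root_mem_Ico
  have ht0 : 0 < |x0| := abs_pos.2 (by rintro rfl; norm_num at hroot)
  have hty : |x0| ≤ y := (hmin y hy).trans_eq (abs_of_nonneg hy0)
  have hq : 0 ≤ |x0| ^ 3 - 2 * |x0| ^ 2 - |x0| + 1 :=
    hy ▸ antitoneOn_cubic ⟨ht0.le, by linarith⟩ ⟨hy0, hy1.le⟩ hty
  have hparts n := (sum_filter_one_or_even_pow_le ht0.le (hty.trans_lt hy1) n).trans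
    (add_sq_div_one_sub_sq_le_one ht0.le (hty.trans_lt hy1) hq)
  refine ⟨1, one_pos, fun n _ => ?_⟩
  rw [compA_eq_compositionsWith, Nat.card_coe_set_eq, Set.ncard_coe_finset, one_mul, one_div_pow,
    le_div_iff₀ (pow_pos ht0 n)]
  exact card_compositionsWith_mul_pow_le_one ht0.le hparts n
end

section
/- Let A be a finite alphabet, let p ≥ 2 be an integer, and let Ω, X ⊆ A^ℕ be subshifts. Then there exists a constant C > 0 such that for all n ≥ 0, | log|P(Δ_n, X_Ω^p × X)| − |Δ_n|·h^T(X_Ω^p × X) | ≤ C·B^n, where B = 1/|x0| ≈ 1.80193 and x0 ≈ 0.55496 is the root of smallest absolute value of the polynomial x³ − 2x² − x + 1. -/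
open Filter Real

/-- Run-length encoding of a word: the list of (letter, length) of its maximal blocks. -/
def runs {α : Type*} [DecidableEq α] : List α → List (α × ℕ)
  | [] => []
  | a :: l =>
    match runs l with
    | [] => [(a, 1)]
    | (b, k) :: r => if a = b then (b, k + 1) :: r else (a, 1) :: (b, k) :: r

/-- Vertices of the 2-tree are words over `{f1, f2}`, encoded as `List (Fin 2)`
(the letter `0` is `f1`, the letter `1` is `f2`); appending letters corresponds to
right multiplication.  `treeBall n = Δ_n` is the ball of radius `n`. -/
def treeBall2 (n : ℕ) : Set (List (Fin 2)) := {g | g.length ≤ n}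

/-- Tree axial product of two subshifts: along every `f1`-ray the labels lie in `X1`,
along every `f2`-ray they lie in `X2`. -/
def treeAxialSub2 {A : Type*} (X1 X2 : Set (ℕ → A)) : Set (List (Fin 2) → A) :=
  {x | ∀ g : List (Fin 2),
    (fun j => x (g ++ List.replicate j (0 : Fin 2))) ∈ X1 ∧
    (fun j => x (g ++ List.replicate j (1 : Fin 2))) ∈ X2}

/-- Tree axial product of two multiplicative subshifts: along every maximal
`f_i`-directed ray (starting at `ε` or at a vertex not ending in `f_i`) the labels
form an element of `X_{Ωi}^{p_i}`. -/
def treeAxialMulMul2 {A : Type*} (p1 p2 : ℕ) (Ω1 Ω2 : Set (ℕ → A)) :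
    Set (List (Fin 2) → A) :=
  {x | ∀ g : List (Fin 2),
    (g.getLast? ≠ some (0 : Fin 2) →
      (fun j => x (g ++ List.replicate j (0 : Fin 2))) ∈ mulSubshift p1 Ω1) ∧
    (g.getLast? ≠ some (1 : Fin 2) →
      (fun j => x (g ++ List.replicate j (1 : Fin 2))) ∈ mulSubshift p2 Ω2)}

/-- Mixed tree axial product: along every maximal `f1`-directed ray the labels form an
element of `X_Ω^p`, and along every `f2`-ray they form an element of `X`. -/
def treeAxialMulSub2 {A : Type*} (p : ℕ) (Ω X : Set (ℕ → A)) :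
    Set (List (Fin 2) → A) :=
  {x | ∀ g : List (Fin 2),
    (g.getLast? ≠ some (0 : Fin 2) →
      (fun j => x (g ++ List.replicate j (0 : Fin 2))) ∈ mulSubshift p Ω) ∧
    (fun j => x (g ++ List.replicate j (1 : Fin 2))) ∈ X}

/-- The length, before reshaping, of the dependency word represented by the reshaped
word `w` in `Δ_k^{(i,1)}` (when `sp = 0`) or `Δ_k^{(1,i)}` (when `sp = 1`): the initial
block in the special direction `sp` of reshaped length `a` stands for a block of length
`i·p^a − i`, and every other block of reshaped length `a` in direction `f1` (resp. `f2`)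
stands for a block of length `p1^a − 1` (resp. `p2^a − 1`). -/
def origLen2 (p1 p2 : ℕ) (sp : Fin 2) (i : ℕ) (w : List (Fin 2)) : ℕ :=
  match runs w with
  | [] => 0
  | (m, a) :: rest =>
      (if m = sp then i * (if m = (0 : Fin 2) then p1 else p2) ^ a - i
       else (if m = (0 : Fin 2) then p1 else p2) ^ a - 1) +
      (rest.map (fun r => (if r.1 = (0 : Fin 2) then p1 else p2) ^ r.2 - 1)).sum

/-- The reshaped dependency set `Δ_k^{(i,1)}` (for `sp = 0`) or `Δ_k^{(1,i)}` (for
`sp = 1`) of the 2-tree with multiplicative constraints `p1, p2`. -/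
def delta2 (p1 p2 : ℕ) (sp : Fin 2) (i k : ℕ) : Set (List (Fin 2)) :=
  {w | origLen2 p1 p2 sp i w ≤ k}

/-- Unreshaped length for the mixed case `X_Ω^p × X`: only `f1`-blocks are reshaped
(the initial one standing for length `i·p^a − i`, later ones for `p^a − 1`), while
`f2`-blocks keep their length. -/
def origLen2m (p i : ℕ) (w : List (Fin 2)) : ℕ :=
  match runs w with
  | [] => 0
  | (m, a) :: rest =>
      (if m = (0 : Fin 2) then i * p ^ a - i else a) +
      (rest.map (fun r => if r.1 = (0 : Fin 2) then p ^ r.2 - 1 else r.2)).sum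

/-- The reshaped dependency set `Δ_k^{(i,1)}` for the mixed case `X_Ω^p × X`. -/
def delta2m (p i k : ℕ) : Set (List (Fin 2)) :=
  {w | origLen2m p i w ≤ k}

/-!
A vertex of the 2-tree is `c · f1^m` with `c` not ending in `f1`, and the constraint of `X_Ω^p`
on the `f1`-ray from `c` only links the positions `i, i p, i p², …` (`p ∤ i`) with each other.
Reading `f1` as "multiply the position by `p`" and `f2` as "start a new ray" therefore cuts the
tree into disjoint copies of the ordinary 2-tree, one for every position that is not entered by
an `f2`-step, and on each copy the constraint is the ordinary axial product `Ω × X`. So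
`|P(Δ_n, X_Ω^p × X)|` is a product, over these copies, of pattern counts of `Ω × X` on reshaped
balls, which have at most `130 · B^k` vertices at depth budget `k` as soon as `B ≥ 9/5`.
Self-similarity of the tree gives `|P(Δ_{n+1})| · F_n · E_n = E_{n+1} · |P(Δ_n)|²`, where
`F_n` and `E_n` come from the copies rooted on the ray of `ε` and have logarithm `O(B^n)`. Hence
`a_n = log |P(Δ_n)|` satisfies `a_{n+1} - 2 a_n = O(B^n)`, which for `B < 2` forces
`a_n = (2^{n+1} - 1) h^T + O(B^n)`; finally `B = 1/|x0| ∈ [9/5, 2)`.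
-/

lemma fin_two_eq_zero_or_one (b : Fin 2) : b = 0 ∨ b = 1 := by
  fin_cases b <;> simp

lemma mul_pow_inj_of_not_dvd {p : ℕ} (hp : 2 ≤ p) {i j l m : ℕ} (hi : ¬ p ∣ i) (hj : ¬ p ∣ j)
    (h : i * p ^ l = j * p ^ m) : i = j ∧ l = m := by
  induction l generalizing m with
  | zero =>
    cases m with
    | zero => simpa using h
    | succ m => exact absurd ⟨j * p ^ m, by rw [← mul_one i, ← pow_zero p, h]; ring⟩ hi
  | succ l ih =>
    cases m with
    | zero => exact absurd ⟨i * p ^ l, by rw [← mul_one j, ← pow_zero p, ← h]; ring⟩ hj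
    | succ m =>
      obtain ⟨h1, h2⟩ := ih (m := m) (by
        simp only [pow_succ, ← mul_assoc] at h
        exact Nat.eq_of_mul_eq_mul_right (by omega) h)
      exact ⟨h1, by omega⟩

lemma shift_add_mem {A : Type*} {Ω : Set (ℕ → A)} (hΩ : ∀ x ∈ Ω, (fun n => x (n + 1)) ∈ Ω)
    {y : ℕ → A} (hy : y ∈ Ω) (k : ℕ) : (fun n => y (n + k)) ∈ Ω := by
  induction k with
  | zero => simpa using hy
  | succ k ih => simpa [add_assoc, add_comm 1] using hΩ _ ih

lemma ncard_le_one_add_ncard_cons {T : Set (List (Fin 2))} (hT : T.Finite) :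
    T.ncard ≤ 1 + {β | 0 :: β ∈ T}.ncard + {β | 1 :: β ∈ T}.ncard := by
  set T₀ := {β | 0 :: β ∈ T}
  set T₁ := {β | 1 :: β ∈ T}
  have hsub : T ⊆ {[]} ∪ (List.cons 0 '' T₀ ∪ List.cons 1 '' T₁) := by
    rintro (_ | ⟨b, β⟩) hβ
    · exact Or.inl rfl
    · rcases fin_two_eq_zero_or_one b with rfl | rfl
      exacts [Or.inr (Or.inl ⟨β, hβ, rfl⟩), Or.inr (Or.inr ⟨β, hβ, rfl⟩)]
  have hfin (b : Fin 2) : {β | b :: β ∈ T}.Finite := hT.preimage List.cons_injective.injOn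
  calc T.ncard ≤ ({[]} ∪ (List.cons 0 '' T₀ ∪ List.cons 1 '' T₁)).ncard :=
        Set.ncard_le_ncard hsub
          ((Set.finite_singleton _).union (((hfin 0).image _).union ((hfin 1).image _)))
    _ ≤ 1 + ((List.cons 0 '' T₀).ncard + (List.cons 1 '' T₁).ncard) := by
        refine (Set.ncard_union_le _ _).trans ?_
        rw [Set.ncard_singleton]
        exact Nat.add_le_add_left (Set.ncard_union_le _ _) 1
    _ = _ := by
        rw [Set.ncard_image_of_injective _ List.cons_injective,
          Set.ncard_image_of_injective _ List.cons_injective, add_assoc]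

lemma sum_range_pow_le {B : ℝ} (hB : 1 < B) (n : ℕ) :
    ∑ j ∈ Finset.range n, B ^ j ≤ B ^ n / (B - 1) := by
  rw [geom_sum_eq hB.ne']
  exact div_le_div_of_nonneg_right (by linarith) (by linarith)

lemma tendsto_sub_mul_div_two_pow {a : ℕ → ℝ} {h : ℝ}
    (hlim : Tendsto (fun n => a n / (2 ^ (n + 1) - 1)) atTop (nhds h)) :
    Tendsto (fun n => (a n - (2 ^ (n + 1) - 1) * h) / 2 ^ n) atTop (nhds 0) := by
  have h2 : Tendsto (fun n : ℕ => (2 : ℝ) - (1 / 2) ^ n) atTop (nhds 2) := by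
    simpa using tendsto_const_nhds.sub
      (tendsto_pow_atTop_nhds_zero_of_lt_one (by norm_num : (0 : ℝ) ≤ 1 / 2) (by norm_num))
  have := (hlim.sub_const h).mul h2
  rw [sub_self, zero_mul] at this
  refine this.congr fun n => ?_
  have : (2 : ℝ) ^ (n + 1) - 1 ≠ 0 := by
    have := one_le_pow₀ (n := n) (by norm_num : (1 : ℝ) ≤ 2)
    rw [pow_succ]
    linarith
  simp only [one_div, inv_pow]
  field_simp
  ring

theorem exists_abs_sub_le_of_abs_succ_sub_two_mul_le {a : ℕ → ℝ} {h B K : ℝ} (hB : 1 ≤ B)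
    (hB2 : B < 2) (ha : ∀ n, |a (n + 1) - 2 * a n| ≤ K * B ^ n)
    (hlim : Tendsto (fun n => a n / (2 ^ (n + 1) - 1)) atTop (nhds h)) :
    ∃ C, 0 < C ∧ ∀ n, |a n - (2 ^ (n + 1) - 1) * h| ≤ C * B ^ n := by
  -- the normalised error `e n` has geometrically small increments and tends to `0`
  set e : ℕ → ℝ := fun n => (a n - (2 ^ (n + 1) - 1) * h) / 2 ^ n
  have hK : 0 ≤ K := by simpa using (abs_nonneg _).trans (ha 0)
  have hstep (n : ℕ) : dist (e n) (e (n + 1)) ≤ (K + |h|) / 2 * (B / 2) ^ n := by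
    have he : e (n + 1) - e n = (a (n + 1) - 2 * a n - h) / 2 ^ (n + 1) := by
      simp only [e]
      field_simp
      ring
    rw [dist_comm, Real.dist_eq, he, abs_div, abs_of_pos (by positivity : (0 : ℝ) < 2 ^ (n + 1)),
      div_le_iff₀ (by positivity)]
    calc |a (n + 1) - 2 * a n - h| ≤ |a (n + 1) - 2 * a n| + |h| := abs_sub _ _
      _ ≤ K * B ^ n + |h| * B ^ n :=
          add_le_add (ha n) (le_mul_of_one_le_right (abs_nonneg h) (one_le_pow₀ hB))
      _ = (K + |h|) / 2 * (B / 2) ^ n * 2 ^ (n + 1) := by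
          rw [div_pow, pow_succ]
          field_simp
  refine ⟨(K + |h|) / (2 - B) + 1, by have := abs_nonneg h; positivity, fun n => ?_⟩
  have hdist := dist_le_of_le_geometric_of_tendsto (B / 2) ((K + |h|) / 2) (by linarith) hstep
    (tendsto_sub_mul_div_two_pow hlim) n
  rw [Real.dist_eq, sub_zero] at hdist
  have hen : |a n - (2 ^ (n + 1) - 1) * h| = |e n| * 2 ^ n := by
    simp only [e, abs_div, abs_of_pos (by positivity : (0 : ℝ) < 2 ^ n)]
    field_simp
  calc |a n - (2 ^ (n + 1) - 1) * h| ≤ (K + |h|) / 2 * (B / 2) ^ n / (1 - B / 2) * 2 ^ n := by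
        rw [hen]
        exact mul_le_mul_of_nonneg_right hdist (by positivity)
    _ = (K + |h|) / (2 - B) * B ^ n := by
        rw [div_pow]
        field_simp
    _ ≤ ((K + |h|) / (2 - B) + 1) * B ^ n := by
        have := pow_pos (by linarith : (0 : ℝ) < B) n
        nlinarith

lemma log_sub_two_mul_log_eq {P₁ P₀ F E₀ E₁ : ℕ} (hP₁ : P₁ ≠ 0) (hP₀ : P₀ ≠ 0) (hF : F ≠ 0)
    (hE₀ : E₀ ≠ 0) (hE₁ : E₁ ≠ 0) (h : P₁ * F * E₀ = E₁ * P₀ ^ 2) :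
    Real.log P₁ - 2 * Real.log P₀ = Real.log E₁ - Real.log F - Real.log E₀ := by
  replace h := congrArg (fun m : ℕ => Real.log m) h
  simp only [Nat.cast_mul, Nat.cast_pow] at h
  rw [Real.log_mul (by positivity) (by positivity), Real.log_mul (by positivity) (by positivity),
    Real.log_mul (by positivity) (by positivity), Real.log_pow] at h
  push_cast at h
  linarith

lemma pattCount_pos {G A : Type*} [Finite A] {D : Set G} (hD : D.Finite) {Y : Set (G → A)}
    (hY : Y.Nonempty) : 0 < pattCount D Y := by
  have := hD.to_subtype
  have : Nonempty (D.domRestrict '' Y) := (hY.image _).to_subtype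
  exact Nat.card_pos (α := D.domRestrict '' Y)

lemma log_pattCount_le {G A : Type*} [Fintype A] {D : Set G} (hD : D.Finite) (Y : Set (G → A)) :
    Real.log (pattCount D Y) ≤ D.ncard * Real.log (Fintype.card A) := by
  have := hD.to_subtype
  rcases (pattCount D Y).eq_zero_or_pos with h | h
  · rw [h, Nat.cast_zero, Real.log_zero]
    exact mul_nonneg (Nat.cast_nonneg _) (Real.log_natCast_nonneg _)
  have hle : pattCount D Y ≤ Fintype.card A ^ D.ncard := by
    calc Nat.card (D.domRestrict '' Y) ≤ Nat.card (D → A) :=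
          Nat.card_le_card_of_injective _ Subtype.val_injective
      _ = Fintype.card A ^ D.ncard := by
          rw [Nat.card_fun, Nat.card_eq_fintype_card, Nat.card_coe_set_eq]
  calc Real.log (pattCount D Y) ≤ Real.log ((Fintype.card A : ℝ) ^ D.ncard) :=
        Real.log_le_log (by exact_mod_cast h) (by exact_mod_cast hle)
    _ = D.ncard * Real.log (Fintype.card A) := Real.log_pow _ _

theorem pattCount_eq_prod {R H G A : Type*} {valid : R → Prop} {ι : R → H → G}
    (hι : ∀ g, ∃! q : R × H, valid q.1 ∧ ι q.1 q.2 = g) {Y : Set (H → A)} (hY : Y.Nonempty)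
    {S : Finset R} (hS : ∀ r ∈ S, valid r) (D : R → Set H) {Λ : Set G}
    (hΛ : ∀ r h, valid r → (ι r h ∈ Λ ↔ r ∈ S ∧ h ∈ D r)) :
    pattCount Λ {x : G → A | ∀ r, valid r → (fun h => x (ι r h)) ∈ Y} =
      ∏ r ∈ S, pattCount (D r) Y := by
  classical
  choose q hq using fun g => (hι g).exists
  have hqι : ∀ r h, valid r → q (ι r h) = (r, h) := fun r h hr => (hι _).unique (hq _) ⟨hr, rfl⟩
  let F : Λ.domRestrict '' {x : G → A | ∀ r, valid r → (fun h => x (ι r h)) ∈ Y} →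
      ∀ r : S, (D r).domRestrict '' Y := fun φ r =>
    ⟨fun h => φ.1 ⟨ι r h, (hΛ r h (hS r r.2)).2 ⟨r.2, h.2⟩⟩, by
      obtain ⟨_, x, hx, rfl⟩ := φ
      exact ⟨_, hx r (hS r r.2), rfl⟩⟩
  have hF : F.Bijective := by
    refine ⟨fun φ ψ hφψ => ?_, fun ψ => ?_⟩
    · ext ⟨g, hg⟩
      obtain ⟨hv, hg'⟩ := hq g
      obtain ⟨hr, hh⟩ := (hΛ _ _ hv).1 (hg' ▸ hg)
      have := congr_fun (congrArg Subtype.val (congr_fun hφψ ⟨_, hr⟩)) ⟨_, hh⟩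
      simp only [F, hg'] at this
      exact this
    · choose y hyY hy using fun r : S => (ψ r).2
      obtain ⟨y₀, hy₀⟩ := hY
      let x : G → A := fun g => if h : (q g).1 ∈ S then y ⟨_, h⟩ (q g).2 else y₀ (q g).2
      have hx : ∀ r, valid r → (fun h => x (ι r h)) = if h : r ∈ S then y ⟨r, h⟩ else y₀ := by
        intro r hr
        funext h
        simp only [x, hqι r h hr]
        split_ifs <;> rfl
      refine ⟨⟨Λ.domRestrict x, x, fun r hr => ?_, rfl⟩, ?_⟩
      · rw [hx r hr]
        split_ifs
        exacts [hyY _, hy₀]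
      · funext r
        ext h
        rw [← hy r]
        exact (congr_fun (hx r (hS r r.2)) h).trans (congr_fun (dif_pos r.2) (h : H))
  calc pattCount Λ _ = Nat.card (∀ r : S, (D r).domRestrict '' Y) := Nat.card_eq_of_bijective F hF
    _ = ∏ r ∈ S, pattCount (D r) Y := by rw [Nat.card_pi, ← Finset.prod_coe_sort S]; rfl

namespace TreeAxialMulSub

/-- A pair `(u, P)` with `u` the start of an `f1`-ray and `P ≥ 1` stands for the vertex at
position `P` (counted from `1`) on that ray. -/
def rayVertex (s : List (Fin 2) × ℕ) : List (Fin 2) := s.1 ++ List.replicate (s.2 - 1) 0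

def IsRayStart (u : List (Fin 2)) : Prop := u.getLast? ≠ some 0

def IsRayState (t : List (Fin 2) × ℕ) : Prop := IsRayStart t.1 ∧ 0 < t.2

/-- One step in the reshaped tree: `f1` moves from position `P` to position `P * p` of the same
ray (the next coordinate constrained together with it in `X_Ω^p`), `f2` moves to the start
of the ray through the `f2`-child. -/
def reshapeStep (p : ℕ) (s : List (Fin 2) × ℕ) (b : Fin 2) : List (Fin 2) × ℕ :=
  if b = 0 then (s.1, s.2 * p) else (rayVertex s ++ [1], 1)

def reshapeState (p : ℕ) (s : List (Fin 2) × ℕ) (β : List (Fin 2)) : List (Fin 2) × ℕ :=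
  β.foldl (reshapeStep p) s

def reshapedVertex (p : ℕ) (s : List (Fin 2) × ℕ) (β : List (Fin 2)) : List (Fin 2) :=
  rayVertex (reshapeState p s β)

/-- The roots of the copies of the reshaped tree: the positions `(u, P)` with `p ∤ P` other than
the ray starts `(w ++ [1], 1)`, which are reached from `w` by an `f2`-step. -/
def IsRoot (p : ℕ) (s : List (Fin 2) × ℕ) : Prop :=
  IsRayStart s.1 ∧ ¬ p ∣ s.2 ∧ (2 ≤ s.2 ∨ s.1 = [])

section Reshape

variable {p : ℕ}

lemma reshapeState_cons (s : List (Fin 2) × ℕ) (b : Fin 2) (β : List (Fin 2)) :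
    reshapeState p s (b :: β) = reshapeState p (reshapeStep p s b) β := rfl

lemma reshapeState_append (s : List (Fin 2) × ℕ) (β γ : List (Fin 2)) :
    reshapeState p s (β ++ γ) = reshapeState p (reshapeState p s β) γ :=
  List.foldl_append

lemma reshapeState_append_one (s : List (Fin 2) × ℕ) (β : List (Fin 2)) :
    reshapeState p s (β ++ [1]) = (reshapedVertex p s β ++ [1], 1) := by
  simp [reshapeState, reshapeStep, reshapedVertex]

lemma reshapeState_append_replicate_zero (s : List (Fin 2) × ℕ) (β : List (Fin 2)) (l : ℕ) :
    reshapeState p s (β ++ List.replicate l 0) =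
      ((reshapeState p s β).1, (reshapeState p s β).2 * p ^ l) := by
  induction l with
  | zero => simp
  | succ l ih =>
    rw [List.replicate_succ', ← List.append_assoc, reshapeState_append, ih]
    simp [reshapeState, reshapeStep, pow_succ, mul_assoc]

lemma reshapedVertex_append_replicate_one (s : List (Fin 2) × ℕ) (β : List (Fin 2)) (j : ℕ) :
    reshapedVertex p s (β ++ List.replicate j 1) = reshapedVertex p s β ++ List.replicate j 1 := by
  induction j with
  | zero => simp
  | succ j ih =>
    rw [List.replicate_succ', ← List.append_assoc, reshapedVertex, reshapeState_append_one, ih]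
    simp [rayVertex]

lemma isRayStart_nil : IsRayStart [] := by simp [IsRayStart]

lemma isRayStart_append_one (u : List (Fin 2)) : IsRayStart (u ++ [1]) := by
  simp [IsRayStart]

lemma IsRayStart.eq_nil_or_append_one {u : List (Fin 2)} (hu : IsRayStart u) :
    u = [] ∨ ∃ w, u = w ++ [1] := by
  rcases u.eq_nil_or_concat with rfl | ⟨w, b, rfl⟩
  · exact Or.inl rfl
  · rcases fin_two_eq_zero_or_one b with rfl | rfl
    · simp [IsRayStart] at hu
    · exact Or.inr ⟨w, List.concat_eq_append⟩

lemma IsRayStart.append_replicate_inj {c c' : List (Fin 2)} {m m' : ℕ} (hc : IsRayStart c)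
    (hc' : IsRayStart c') (h : c ++ List.replicate m 0 = c' ++ List.replicate m' 0) :
    c = c' ∧ m = m' := by
  induction m generalizing m' with
  | zero =>
    cases m' with
    | zero => simpa using h
    | succ m' =>
      rw [List.replicate_zero, List.append_nil] at h
      simp [IsRayStart, h, List.replicate_succ'] at hc
  | succ m ih =>
    cases m' with
    | zero =>
      rw [List.replicate_zero, List.append_nil] at h
      simp [IsRayStart, ← h, List.replicate_succ'] at hc'
    | succ m' =>
      simp only [List.replicate_succ', ← List.append_assoc, List.append_cancel_right_eq] at h
      exact (ih h).imp_right (congrArg (· + 1))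

lemma exists_isRayStart_append_replicate (v : List (Fin 2)) :
    ∃ c m, IsRayStart c ∧ v = c ++ List.replicate m 0 := by
  induction v using List.reverseRecOn with
  | nil => exact ⟨[], 0, isRayStart_nil, rfl⟩
  | append_singleton w b ih =>
    rcases fin_two_eq_zero_or_one b with rfl | rfl
    · obtain ⟨c, m, hc, rfl⟩ := ih
      exact ⟨c, m + 1, hc, by simp [List.replicate_succ']⟩
    · exact ⟨w ++ [1], 0, isRayStart_append_one w, by simp⟩

lemma rayVertex_inj {t t' : List (Fin 2) × ℕ} (ht : IsRayState t) (ht' : IsRayState t')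
    (h : rayVertex t = rayVertex t') : t = t' := by
  obtain ⟨h1, h2⟩ := ht.1.append_replicate_inj ht'.1 h
  exact Prod.ext h1 (by have := ht.2; have := ht'.2; omega)

lemma IsRayState.reshapeState (hp : 0 < p) {s : List (Fin 2) × ℕ} (hs : IsRayState s)
    (β : List (Fin 2)) : IsRayState (reshapeState p s β) := by
  induction β generalizing s with
  | nil => exact hs
  | cons b β ih =>
    rw [reshapeState_cons]
    rcases fin_two_eq_zero_or_one b with rfl | rfl
    · exact ih ⟨hs.1, by simpa [reshapeStep] using Nat.mul_pos hs.2 hp⟩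
    · exact ih ⟨isRayStart_append_one _, by simp [reshapeStep]⟩

lemma IsRoot.isRayState {s : List (Fin 2) × ℕ} (hs : IsRoot p s) : IsRayState s :=
  ⟨hs.1, Nat.pos_of_ne_zero fun h => hs.2.1 (h ▸ dvd_zero p)⟩

lemma isRoot_nil_one (hp : 2 ≤ p) : IsRoot p ([], 1) :=
  ⟨isRayStart_nil, fun h => by have := Nat.le_of_dvd one_pos h; omega, Or.inr rfl⟩

lemma IsRoot.ne_reshapeState_append_one {s : List (Fin 2) × ℕ} (hs : IsRoot p s)
    (s' : List (Fin 2) × ℕ) (γ : List (Fin 2)) : s ≠ reshapeState p s' (γ ++ [1]) := by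
  rintro rfl
  simp [IsRoot, reshapeState_append_one] at hs

lemma exists_rayVertex_eq (hp : 2 ≤ p) (v : List (Fin 2)) :
    ∃ c i l, IsRayStart c ∧ ¬ p ∣ i ∧ c.length ≤ v.length ∧ rayVertex (c, i * p ^ l) = v := by
  obtain ⟨c, m, hc, rfl⟩ := exists_isRayStart_append_replicate v
  obtain ⟨l, i, hi, hm⟩ := Nat.exists_eq_pow_mul_and_not_dvd m.succ_ne_zero p (by omega)
  exact ⟨c, i, l, hc, hi, by simp, by simp [rayVertex, mul_comm i, ← hm]⟩

lemma exists_root_reshapeState_eq (hp : 2 ≤ p) (t : List (Fin 2) × ℕ) (ht : IsRayStart t.1)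
    (hpt : ¬ p ∣ t.2) : ∃ s β, IsRoot p s ∧ reshapeState p s β = t := by
  induction hn : t.1.length using Nat.strong_induction_on generalizing t with
  | _ n ih =>
  by_cases hroot : 2 ≤ t.2 ∨ t.1 = []
  · exact ⟨t, [], ⟨ht, hpt, hroot⟩, rfl⟩
  rw [not_or, not_le] at hroot
  have ht2 : t.2 = 1 := by
    have : t.2 ≠ 0 := fun h => hpt (h ▸ dvd_zero p)
    omega
  -- `t` is entered by an `f2`-step from the ray position of its parent `w`
  obtain ⟨w, hw⟩ := ht.eq_nil_or_append_one.resolve_left hroot.2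
  obtain ⟨c, i, l, hc, hi, hcw, hv⟩ := exists_rayVertex_eq hp w
  obtain ⟨s, γ, hs, hγ⟩ :=
    ih c.length (by rw [← hn, hw, List.length_append]; simp; omega) (c, i) hc hi rfl
  refine ⟨s, γ ++ List.replicate l 0 ++ [1], hs, ?_⟩
  rw [reshapeState_append_one, reshapedVertex, reshapeState_append_replicate_zero, hγ, hv, ← hw,
    ← ht2]

lemma exists_root_reshapedVertex_eq (hp : 2 ≤ p) (v : List (Fin 2)) :
    ∃ s β, IsRoot p s ∧ reshapedVertex p s β = v := by
  obtain ⟨c, i, l, hc, hi, -, hv⟩ := exists_rayVertex_eq hp v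
  obtain ⟨s, γ, hs, hγ⟩ := exists_root_reshapeState_eq hp (c, i) hc hi
  exact ⟨s, γ ++ List.replicate l 0, hs, by
    rw [reshapedVertex, reshapeState_append_replicate_zero, hγ, hv]⟩

lemma IsRoot.not_dvd_reshapeState (hp : 2 ≤ p) {s : List (Fin 2) × ℕ} (hs : IsRoot p s)
    {c : List (Fin 2)} (hc : IsRayStart c) : ¬ p ∣ (reshapeState p s c).2 := by
  rcases hc.eq_nil_or_append_one with rfl | ⟨γ, rfl⟩
  · exact hs.2.1
  · rw [reshapeState_append_one, Nat.dvd_one]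
    omega

lemma reshapeState_inj (hp : 2 ≤ p) {s s' : List (Fin 2) × ℕ} (hs : IsRoot p s)
    (hs' : IsRoot p s') {β β' : List (Fin 2)} (h : reshapeState p s β = reshapeState p s' β') :
    s = s' ∧ β = β' := by
  induction hn : β.length using Nat.strong_induction_on generalizing β β' with
  | _ n ih =>
  obtain ⟨c, l, hc, rfl⟩ := exists_isRayStart_append_replicate β
  obtain ⟨c', l', hc', rfl⟩ := exists_isRayStart_append_replicate β'
  rw [reshapeState_append_replicate_zero, reshapeState_append_replicate_zero, Prod.ext_iff] at h
  obtain ⟨h2, rfl⟩ :=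
    mul_pow_inj_of_not_dvd hp (hs.not_dvd_reshapeState hp hc) (hs'.not_dvd_reshapeState hp hc') h.2
  have hstate : reshapeState p s c = reshapeState p s' c' := Prod.ext h.1 h2
  rcases hc.eq_nil_or_append_one with rfl | ⟨γ, rfl⟩ <;>
    rcases hc'.eq_nil_or_append_one with rfl | ⟨γ', rfl⟩
  · exact ⟨hstate, rfl⟩
  · exact absurd hstate (hs.ne_reshapeState_append_one s' γ')
  · exact absurd hstate.symm (hs'.ne_reshapeState_append_one s γ)
  · rw [reshapeState_append_one, reshapeState_append_one, Prod.mk.injEq,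
      List.append_cancel_right_eq] at hstate
    have hγ := rayVertex_inj (hs.isRayState.reshapeState (by omega) γ)
      (hs'.isRayState.reshapeState (by omega) γ') hstate.1
    obtain ⟨rfl, rfl⟩ := ih γ.length (by simp [← hn]) hγ rfl
    exact ⟨rfl, rfl⟩

lemma reshapedVertex_inj (hp : 2 ≤ p) {s s' : List (Fin 2) × ℕ} (hs : IsRoot p s)
    (hs' : IsRoot p s') {β β' : List (Fin 2)} (h : reshapedVertex p s β = reshapedVertex p s' β') :
    s = s' ∧ β = β' :=
  reshapeState_inj hp hs hs' <| rayVertex_inj (hs.isRayState.reshapeState (by omega) β)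
    (hs'.isRayState.reshapeState (by omega) β') h

end Reshape

theorem mem_treeAxialMulSub2_iff {A : Type*} {p : ℕ} (hp : 2 ≤ p) {Ω X : Set (ℕ → A)}
    (hΩ : ∀ x ∈ Ω, (fun n => x (n + 1)) ∈ Ω) (x : List (Fin 2) → A) :
    x ∈ treeAxialMulSub2 p Ω X ↔
      ∀ s, IsRoot p s → (fun β => x (reshapedVertex p s β)) ∈ treeAxialSub2 Ω X := by
  constructor
  · intro hx s hs β
    refine ⟨?_, by simpa only [reshapedVertex_append_replicate_one] using (hx _).2⟩
    have ht := hs.isRayState.reshapeState (p := p) (by omega) β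
    obtain ⟨l, i, hi, hti⟩ := Nat.exists_eq_pow_mul_and_not_dvd ht.2.ne' p (by omega)
    convert shift_add_mem hΩ ((hx _).1 ht.1 i (Nat.pos_of_ne_zero (by rintro rfl; simp at hi)) hi) l
      using 3 with j
    dsimp only
    rw [reshapedVertex, reshapeState_append_replicate_zero, rayVertex, hti]
    ring_nf
  · intro hY g
    refine ⟨fun hg i _ hi => ?_, ?_⟩
    · obtain ⟨s, β, hs, hβ⟩ := exists_root_reshapeState_eq hp (g, i) hg hi
      simpa [reshapedVertex, reshapeState_append_replicate_zero, hβ, rayVertex] using (hY s hs β).1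
    · obtain ⟨s, β, hs, rfl⟩ := exists_root_reshapedVertex_eq hp g
      simpa only [reshapedVertex_append_replicate_one] using (hY s hs β).2

/-- The number of letters that a reshaped word costs in the original tree, beyond those of its
root: `f1` at position `P` advances `P * p - P` places along the ray, `f2` one place. This is
`origLen2m p P`, computed letter by letter instead of from the run lengths. -/
def reshapeCost (p : ℕ) : ℕ → List (Fin 2) → ℕ
  | _, [] => 0
  | P, b :: β => if b = 0 then (P * p - P) + reshapeCost p (P * p) β else 1 + reshapeCost p 1 β

def costBall (p P k : ℕ) : Set (List (Fin 2)) := {β | reshapeCost p P β ≤ k}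

open scoped Classical in
noncomputable def roots (p n : ℕ) : Finset (List (Fin 2) × ℕ) :=
  ((List.finite_length_le (Fin 2) n).toFinset ×ˢ Finset.range (n + 2)).filter
    fun s => IsRoot p s ∧ s.1.length + s.2 ≤ n + 1

section Window

variable {p : ℕ}

lemma mem_roots {n : ℕ} {s : List (Fin 2) × ℕ} :
    s ∈ roots p n ↔ IsRoot p s ∧ s.1.length + s.2 ≤ n + 1 := by
  classical
  simp only [roots, Finset.mem_filter, Finset.mem_product, Set.Finite.mem_toFinset,
    Set.mem_ofPred_eq, Finset.mem_range, and_iff_right_iff_imp]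
  intro h
  have := h.1.isRayState.2
  omega

lemma length_reshapedVertex (hp : 0 < p) {s : List (Fin 2) × ℕ} (hs : 0 < s.2)
    (β : List (Fin 2)) :
    (reshapedVertex p s β).length + 1 = s.1.length + s.2 + reshapeCost p s.2 β := by
  induction β generalizing s with
  | nil => simp [reshapedVertex, reshapeState, rayVertex, reshapeCost]; omega
  | cons b β ih =>
    rw [reshapedVertex, reshapeState_cons, ← reshapedVertex]
    rcases fin_two_eq_zero_or_one b with rfl | rfl
    · have hsp : s.2 ≤ s.2 * p := Nat.le_mul_of_pos_right _ hp
      have := ih (s := (s.1, s.2 * p)) (Nat.mul_pos hs hp)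
      simp only [reshapeStep, reshapeCost, if_true] at this ⊢
      omega
    · have := ih (s := (rayVertex s ++ [1], 1)) one_pos
      simp only [reshapeStep, reshapeCost, one_ne_zero, if_false, rayVertex, List.length_append,
        List.length_replicate, List.length_singleton] at this ⊢
      omega

lemma reshapedVertex_mem_treeBall2_iff (hp : 0 < p) {s : List (Fin 2) × ℕ} (hs : IsRoot p s)
    (β : List (Fin 2)) (n : ℕ) :
    reshapedVertex p s β ∈ treeBall2 n ↔
      s ∈ roots p n ∧ β ∈ costBall p s.2 (n + 1 - (s.1.length + s.2)) := by
  have := length_reshapedVertex hp hs.isRayState.2 β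
  simp only [treeBall2, costBall, mem_roots, Set.mem_ofPred_eq, hs, true_and]
  omega

end Window

/-- The factor of the copy rooted at `s` in the pattern count on `Δ_n`. -/
noncomputable def rootCount {A : Type*} (Y : Set (List (Fin 2) → A)) (p n : ℕ)
    (s : List (Fin 2) × ℕ) : ℕ :=
  pattCount (costBall p s.2 (n + 1 - (s.1.length + s.2))) Y

/-- The factor of the copies rooted on the `f1`-ray of `ε`. -/
noncomputable def rayRootCount {A : Type*} (Y : Set (List (Fin 2) → A)) (p m : ℕ) : ℕ :=
  ∏ s ∈ (roots p m).filter (·.1 = []), rootCount Y p m s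

theorem pattCount_treeAxialMulSub2_eq_prod {A : Type*} {p : ℕ} (hp : 2 ≤ p)
    {Ω X : Set (ℕ → A)} (hΩ : ∀ x ∈ Ω, (fun n => x (n + 1)) ∈ Ω)
    (hY : (treeAxialSub2 Ω X).Nonempty) (n : ℕ) :
    pattCount (treeBall2 n) (treeAxialMulSub2 p Ω X) =
      ∏ s ∈ roots p n, rootCount (treeAxialSub2 Ω X) p n s := by
  have hι : ∀ v, ∃! q : (List (Fin 2) × ℕ) × List (Fin 2),
      IsRoot p q.1 ∧ reshapedVertex p q.1 q.2 = v := by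
    intro v
    obtain ⟨s, β, hs, rfl⟩ := exists_root_reshapedVertex_eq hp v
    refine ⟨(s, β), ⟨hs, rfl⟩, fun q hq => ?_⟩
    obtain ⟨rfl, rfl⟩ := reshapedVertex_inj hp hq.1 hs hq.2
    rfl
  rw [Set.ext (mem_treeAxialMulSub2_iff hp hΩ)]
  exact pattCount_eq_prod hι hY (fun s hs => (mem_roots.1 hs).1) _
    fun s β hs => reshapedVertex_mem_treeBall2_iff (by omega) hs β n

section RootRecursion

variable {p : ℕ}

lemma isRayStart_cons_iff {b : Fin 2} {u : List (Fin 2)} (hu : u ≠ []) :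
    IsRayStart (b :: u) ↔ IsRayStart u := by
  obtain ⟨a, w, rfl⟩ := List.exists_cons_of_ne_nil hu
  simp [IsRayStart, List.getLast?_cons_cons]

lemma cons_one_mem_roots_succ_iff {n : ℕ} {u : List (Fin 2)} {P : ℕ} :
    ((1 :: u, P) ∈ roots p (n + 1)) ↔ (u, P) ∈ roots p n ∧ 2 ≤ P := by
  simp only [mem_roots, IsRoot, List.length_cons, Nat.add_right_comm _ 1 P,
    Nat.add_le_add_iff_right]
  rcases eq_or_ne u [] with rfl | hu
  · simp [IsRayStart]
    tauto
  · simp only [isRayStart_cons_iff hu, hu, reduceCtorEq, or_false]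
    tauto

lemma cons_zero_mem_roots_succ_iff {n : ℕ} {u : List (Fin 2)} {P : ℕ} :
    ((0 :: u, P) ∈ roots p (n + 1)) ↔ (u, P) ∈ roots p n ∧ u ≠ [] := by
  simp only [mem_roots, IsRoot, List.length_cons, Nat.add_right_comm _ 1 P,
    Nat.add_le_add_iff_right]
  rcases eq_or_ne u [] with rfl | hu
  · simp [IsRayStart]
  · simp only [isRayStart_cons_iff hu, hu, reduceCtorEq, or_false]
    tauto

lemma prod_roots_succ_filter_ne_nil {M : Type*} [CommMonoid M] (n : ℕ)
    (f : List (Fin 2) × ℕ → M) :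
    ∏ s ∈ (roots p (n + 1)).filter (·.1 ≠ []), f s =
      (∏ s ∈ (roots p n).filter (2 ≤ ·.2), f (1 :: s.1, s.2)) *
        ∏ s ∈ (roots p n).filter (·.1 ≠ []), f (0 :: s.1, s.2) := by
  classical
  have hsplit : (roots p (n + 1)).filter (·.1 ≠ []) =
      ((roots p n).filter (2 ≤ ·.2)).image (fun s => (1 :: s.1, s.2)) ∪
        ((roots p n).filter (·.1 ≠ [])).image (fun s => (0 :: s.1, s.2)) := by
    ext ⟨_ | ⟨b, u⟩, P⟩
    · simp
    · rcases fin_two_eq_zero_or_one b with rfl | rfl <;>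
        simp [cons_one_mem_roots_succ_iff, cons_zero_mem_roots_succ_iff]
  have hinj (b : Fin 2) : Set.InjOn (fun s : List (Fin 2) × ℕ => (b :: s.1, s.2)) Set.univ :=
    fun s _ t _ h => by simpa [Prod.ext_iff] using h
  have hdisj : Disjoint (((roots p n).filter (2 ≤ ·.2)).image (fun s => (1 :: s.1, s.2)))
      (((roots p n).filter (·.1 ≠ [])).image (fun s => (0 :: s.1, s.2))) := by
    refine Finset.disjoint_left.2 fun s hs ht => ?_
    obtain ⟨_, -, rfl⟩ := Finset.mem_image.1 hs
    obtain ⟨_, -, h⟩ := Finset.mem_image.1 ht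
    simp at h
  rw [hsplit, Finset.prod_union hdisj,
    Finset.prod_image fun s _ t _ => hinj 1 trivial trivial,
    Finset.prod_image fun s _ t _ => hinj 0 trivial trivial]

lemma roots_filter_lt_two (hp : 2 ≤ p) (n : ℕ) :
    (roots p n).filter (fun s => ¬ 2 ≤ s.2) = {([], 1)} := by
  ext ⟨u, P⟩
  simp only [Finset.mem_filter, mem_roots, IsRoot, Finset.mem_singleton, Prod.mk.injEq]
  constructor
  · rintro ⟨⟨⟨-, hP, h⟩, -⟩, h2⟩
    have : P ≠ 0 := by rintro rfl; simp at hP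
    exact ⟨h.resolve_left h2, by omega⟩
  · rintro ⟨rfl, rfl⟩
    exact ⟨⟨isRoot_nil_one hp, by simp⟩, by omega⟩

/-- Self-similarity of the tree: the roots of `Δ_{n+1}` below `f2` (resp. `f1`) are the roots of
`Δ_n` with `P ≥ 2` (resp. off the ray of `ε`), moved into that subtree. -/
theorem prod_roots_succ_mul {M : Type*} [CommMonoid M] (hp : 2 ≤ p) (n : ℕ)
    (f g : List (Fin 2) × ℕ → M) (hfg : ∀ b u P, g (b :: u, P) = f (u, P)) :
    (∏ s ∈ roots p (n + 1), g s) * f ([], 1) * ∏ s ∈ (roots p n).filter (·.1 = []), f s =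
      (∏ s ∈ (roots p (n + 1)).filter (·.1 = []), g s) * (∏ s ∈ roots p n, f s) ^ 2 := by
  have h2 : ∏ s ∈ roots p n, f s = (∏ s ∈ (roots p n).filter (2 ≤ ·.2), f s) * f ([], 1) := by
    rw [← Finset.prod_filter_mul_prod_filter_not (roots p n) (2 ≤ ·.2),
      roots_filter_lt_two hp, Finset.prod_singleton]
  have hnil : ∏ s ∈ roots p n, f s =
      (∏ s ∈ (roots p n).filter (·.1 ≠ []), f s) * ∏ s ∈ (roots p n).filter (·.1 = []), f s := by
    rw [← Finset.prod_filter_mul_prod_filter_not (roots p n) (·.1 ≠ [])]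
    simp only [ne_eq, not_not]
  rw [← Finset.prod_filter_not_mul_prod_filter (roots p (n + 1)) (·.1 = []),
    prod_roots_succ_filter_ne_nil]
  simp only [hfg]
  rw [sq]
  nth_rewrite 1 [h2]
  rw [hnil]
  ac_rfl

end RootRecursion

section Counting

variable {p : ℕ}

lemma length_le_reshapeCost (hp : 2 ≤ p) {P : ℕ} (hP : 0 < P) (β : List (Fin 2)) :
    β.length ≤ reshapeCost p P β := by
  induction β generalizing P with
  | nil => simp
  | cons b β ih =>
    have hPp : P < P * p := by nlinarith
    rcases fin_two_eq_zero_or_one b with rfl | rfl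
    · simp only [reshapeCost, if_true, List.length_cons]
      have := ih (by omega : 0 < P * p)
      omega
    · simp only [reshapeCost, one_ne_zero, if_false, List.length_cons]
      have := ih one_pos
      omega

lemma costBall_finite (hp : 2 ≤ p) {P : ℕ} (hP : 0 < P) (k : ℕ) : (costBall p P k).Finite :=
  (List.finite_length_le (Fin 2) k).subset fun β hβ => (length_le_reshapeCost hp hP β).trans hβ

lemma rootCount_pos {A : Type*} [Finite A] (hp : 2 ≤ p) {Y : Set (List (Fin 2) → A)}
    (hY : Y.Nonempty) (n : ℕ)
    {s : List (Fin 2) × ℕ} (hs : IsRoot p s) : 0 < rootCount Y p n s :=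
  pattCount_pos (costBall_finite hp hs.isRayState.2 _) hY

lemma setOf_cons_zero_mem_costBall (P k : ℕ) : {β | 0 :: β ∈ costBall p P k} =
    if P * p - P ≤ k then costBall p (P * p) (k - (P * p - P)) else ∅ := by
  split_ifs with hc <;> ext β <;> simp only [costBall, reshapeCost, Set.mem_ofPred_eq, if_true,
    Set.mem_empty_iff_false, iff_false] <;> omega

lemma setOf_cons_one_mem_costBall (P k : ℕ) :
    {β | 1 :: β ∈ costBall p P k} = if 1 ≤ k then costBall p 1 (k - 1) else ∅ := by
  split_ifs with hc <;> ext β <;> simp only [costBall, reshapeCost, Set.mem_ofPred_eq,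
    one_ne_zero, if_false, Set.mem_empty_iff_false, iff_false] <;> omega

theorem ncard_costBall_mul_pow_le (hp : 2 ≤ p) {x : ℝ} (hx : 0 ≤ x) (hx1 : x ≤ 1)
    {W : ℕ → ℝ} (hW : ∀ P, 0 ≤ W P)
    (hstep : ∀ P, 0 < P → 1 + W (P * p) * x ^ (P * p - P) + W 1 * x ≤ W P)
    (k : ℕ) {P : ℕ} (hP : 0 < P) : (costBall p P k).ncard * x ^ k ≤ W P := by
  induction k using Nat.strong_induction_on generalizing P with
  | _ k ih =>
  have hPp : P < P * p := by nlinarith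
  have h0 : ({β | 0 :: β ∈ costBall p P k}.ncard : ℝ) * x ^ k ≤ W (P * p) * x ^ (P * p - P) := by
    rw [setOf_cons_zero_mem_costBall]
    split_ifs with hc
    · rw [show k = (k - (P * p - P)) + (P * p - P) by omega, pow_add, ← mul_assoc,
        Nat.add_sub_cancel]
      exact mul_le_mul_of_nonneg_right (ih _ (by omega) (by omega)) (pow_nonneg hx _)
    · simpa using mul_nonneg (hW _) (pow_nonneg hx _)
  have h1 : ({β | 1 :: β ∈ costBall p P k}.ncard : ℝ) * x ^ k ≤ W 1 * x := by
    rw [setOf_cons_one_mem_costBall]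
    split_ifs with hk
    · rw [show k = (k - 1) + 1 by omega, pow_succ, ← mul_assoc, Nat.add_sub_cancel]
      exact mul_le_mul_of_nonneg_right (ih _ (by omega) one_pos) hx
    · simpa using mul_nonneg (hW 1) hx
  have hsplit : ((costBall p P k).ncard : ℝ) ≤
      1 + {β | 0 :: β ∈ costBall p P k}.ncard + {β | 1 :: β ∈ costBall p P k}.ncard := by
    exact_mod_cast ncard_le_one_add_ncard_cons (costBall_finite hp hP k)
  calc ((costBall p P k).ncard : ℝ) * x ^ k
      ≤ (1 + {β | 0 :: β ∈ costBall p P k}.ncard + {β | 1 :: β ∈ costBall p P k}.ncard) * x ^ k :=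
        mul_le_mul_of_nonneg_right hsplit (pow_nonneg hx _)
    _ ≤ 1 + W (P * p) * x ^ (P * p - P) + W 1 * x := by
        have := pow_le_one₀ hx hx1 (n := k)
        linarith
    _ ≤ W P := hstep P hP

lemma ncard_costBall_le (hp : 2 ≤ p) {B : ℝ} (hB : 9 / 5 ≤ B) (k : ℕ) {P : ℕ} (hP : 0 < P) :
    ((costBall p P k).ncard : ℝ) ≤ 130 * B ^ k := by
  set x := B⁻¹
  have hx0 : 0 < x := by positivity
  have hx : x ≤ 5 / 9 := by rw [inv_le_comm₀ (by linarith) (by norm_num)]; linarith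
  have hx2 : x ^ 2 ≤ (5 / 9) ^ 2 := pow_le_pow_left₀ hx0.le hx 2
  have hx3 : x ^ 3 ≤ (5 / 9) ^ 3 := pow_le_pow_left₀ hx0.le hx 3
  have hxpow (m n : ℕ) (h : m ≤ n) : x ^ n ≤ x ^ m := pow_le_pow_of_le_one hx0.le (by linarith) h
  -- the potential for positions `1`, `2` and `≥ 3`, tuned to `x ≤ 5/9`
  let W : ℕ → ℝ := fun P => if P = 1 then 130 else if P = 2 then 101 else 89
  have hW (P : ℕ) : 89 ≤ W P ∧ W P ≤ 130 := by simp only [W]; split_ifs <;> norm_num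
  have hW2 (P : ℕ) (hP : 2 ≤ P) : W P ≤ 101 := by
    simp only [W]; split_ifs <;> first | omega | norm_num
  have hW3 (P : ℕ) (hP : 3 ≤ P) : W P = 89 := by
    simp only [W]; split_ifs <;> first | omega | rfl
  have hstep (P : ℕ) (hP : 0 < P) : 1 + W (P * p) * x ^ (P * p - P) + W 1 * x ≤ W P := by
    have hPp : 2 * P ≤ P * p := by nlinarith
    have hW1 : W 1 = 130 := rfl
    rcases (show P = 1 ∨ P = 2 ∨ 3 ≤ P by omega) with rfl | rfl | hP3
    · have := mul_le_mul (hW2 _ (by omega)) (hxpow 1 (1 * p - 1) (by omega)) (by positivity)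
        (by norm_num)
      simp only [hW1, pow_one] at this ⊢
      linarith
    · rw [hW3 _ (by omega), hW1, show W 2 = 101 from rfl]
      have := mul_le_mul_of_nonneg_left (hxpow 2 (2 * p - 2) (by omega))
        (by norm_num : (0 : ℝ) ≤ 89)
      linarith
    · rw [hW3 _ (by nlinarith), hW1, hW3 _ hP3]
      have := mul_le_mul_of_nonneg_left (hxpow 3 (P * p - P) (by omega))
        (by norm_num : (0 : ℝ) ≤ 89)
      linarith
  have := ncard_costBall_mul_pow_le hp hx0.le (by linarith) (fun P => by linarith [hW P]) hstep k hP
  rw [inv_pow, ← div_eq_mul_inv, div_le_iff₀ (by positivity)] at this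
  exact this.trans (mul_le_mul_of_nonneg_right (hW P).2 (by positivity))

lemma log_pattCount_costBall_le {A : Type*} [Fintype A] (hp : 2 ≤ p) {B : ℝ} (hB : 9 / 5 ≤ B)
    (Y : Set (List (Fin 2) → A)) {P : ℕ} (hP : 0 < P) (k : ℕ) :
    Real.log (pattCount (costBall p P k) Y) ≤ 130 * Real.log (Fintype.card A) * B ^ k := by
  calc Real.log (pattCount (costBall p P k) Y)
      ≤ (costBall p P k).ncard * Real.log (Fintype.card A) :=
        log_pattCount_le (costBall_finite hp hP k) Y
    _ ≤ 130 * B ^ k * Real.log (Fintype.card A) :=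
        mul_le_mul_of_nonneg_right (ncard_costBall_le hp hB k hP) (Real.log_natCast_nonneg _)
    _ = 130 * Real.log (Fintype.card A) * B ^ k := by ring

lemma log_rayRootCount_le {A : Type*} [Fintype A] (hp : 2 ≤ p) {B : ℝ} (hB : 9 / 5 ≤ B)
    {Y : Set (List (Fin 2) → A)} (hY : Y.Nonempty) (m : ℕ) :
    Real.log (rayRootCount Y p m) ≤
      130 * Real.log (Fintype.card A) * (B ^ 2 / (B - 1)) * B ^ m := by
  classical
  set c := 130 * Real.log (Fintype.card A)
  have hc : 0 ≤ c := mul_nonneg (by norm_num) (Real.log_natCast_nonneg _)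
  rw [rayRootCount, Nat.cast_prod, Real.log_prod fun s hs => by
    exact_mod_cast (rootCount_pos hp hY m (mem_roots.1 (Finset.mem_filter.1 hs).1).1).ne']
  calc ∑ s ∈ (roots p m).filter (·.1 = []), Real.log (rootCount Y p m s)
      ≤ ∑ s ∈ (roots p m).filter (·.1 = []), c * B ^ (m + 1 - s.2) := by
        refine Finset.sum_le_sum fun s hs => ?_
        obtain ⟨hs, hnil⟩ := Finset.mem_filter.1 hs
        simpa [rootCount, hnil] using
          log_pattCount_costBall_le hp hB Y (mem_roots.1 hs).1.isRayState.2 (m + 1 - s.2)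
    _ = ∑ P ∈ ((roots p m).filter (·.1 = [])).image Prod.snd, c * B ^ (m + 1 - P) := by
        rw [Finset.sum_image fun s hs t ht h => Prod.ext
          ((Finset.mem_filter.1 hs).2.trans (Finset.mem_filter.1 ht).2.symm) h]
    _ ≤ ∑ P ∈ Finset.range (m + 2), c * B ^ (m + 1 - P) := by
        refine Finset.sum_le_sum_of_subset_of_nonneg (fun P hP => ?_) fun _ _ _ => by positivity
        obtain ⟨s, hs, rfl⟩ := Finset.mem_image.1 hP
        have := (mem_roots.1 (Finset.mem_filter.1 hs).1).2
        exact Finset.mem_range.2 (by omega)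
    _ = c * ∑ j ∈ Finset.range (m + 2), B ^ j := by
        rw [← Finset.mul_sum, ← Finset.sum_range_reflect]
        refine congrArg _ (Finset.sum_congr rfl fun j hj => ?_)
        rw [Finset.mem_range] at hj
        congr 1
        omega
    _ ≤ c * (B ^ (m + 2) / (B - 1)) :=
        mul_le_mul_of_nonneg_left (sum_range_pow_le (by linarith) _) hc
    _ = c * (B ^ 2 / (B - 1)) * B ^ m := by ring

end Counting

section Defect

variable {A : Type*} {p : ℕ} {Ω X : Set (ℕ → A)}

lemma pattCount_treeAxialMulSub2_ne_zero [Finite A] (hp : 2 ≤ p)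
    (hΩ : ∀ x ∈ Ω, (fun n => x (n + 1)) ∈ Ω) (hY : (treeAxialSub2 Ω X).Nonempty) (n : ℕ) :
    pattCount (treeBall2 n) (treeAxialMulSub2 p Ω X) ≠ 0 := by
  rw [pattCount_treeAxialMulSub2_eq_prod hp hΩ hY]
  exact (Finset.prod_pos fun s hs => rootCount_pos hp hY n (mem_roots.1 hs).1).ne'

lemma rayRootCount_ne_zero [Finite A] (hp : 2 ≤ p) {Y : Set (List (Fin 2) → A)}
    (hY : Y.Nonempty) (m : ℕ) :
    rayRootCount Y p m ≠ 0 :=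
  (Finset.prod_pos fun _ hs =>
    rootCount_pos hp hY m (mem_roots.1 (Finset.mem_filter.1 hs).1).1).ne'

lemma log_pattCount_succ_sub_two_mul [Finite A] (hp : 2 ≤ p)
    (hΩ : ∀ x ∈ Ω, (fun n => x (n + 1)) ∈ Ω) (hY : (treeAxialSub2 Ω X).Nonempty) (n : ℕ) :
    Real.log (pattCount (treeBall2 (n + 1)) (treeAxialMulSub2 p Ω X)) -
        2 * Real.log (pattCount (treeBall2 n) (treeAxialMulSub2 p Ω X)) =
      Real.log (rayRootCount (treeAxialSub2 Ω X) p (n + 1)) -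
        Real.log (pattCount (costBall p 1 n) (treeAxialSub2 Ω X)) -
        Real.log (rayRootCount (treeAxialSub2 Ω X) p n) := by
  have hrec := prod_roots_succ_mul hp n (rootCount (treeAxialSub2 Ω X) p n)
    (rootCount (treeAxialSub2 Ω X) p (n + 1)) fun b u P => by
      simp only [rootCount, List.length_cons]
      congr 2
      omega
  rw [← pattCount_treeAxialMulSub2_eq_prod hp hΩ hY,
    ← pattCount_treeAxialMulSub2_eq_prod hp hΩ hY] at hrec
  have hF : rootCount (treeAxialSub2 Ω X) p n ([], 1) =
      pattCount (costBall p 1 n) (treeAxialSub2 Ω X) := by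
    simp [rootCount]
  have hF0 := hF ▸ (rootCount_pos hp hY n (isRoot_nil_one hp)).ne'
  rw [hF] at hrec
  exact log_sub_two_mul_log_eq (pattCount_treeAxialMulSub2_ne_zero hp hΩ hY _)
    (pattCount_treeAxialMulSub2_ne_zero hp hΩ hY _) hF0 (rayRootCount_ne_zero hp hY _)
    (rayRootCount_ne_zero hp hY _) hrec

theorem exists_abs_log_pattCount_succ_sub_two_mul_le [Fintype A] (hp : 2 ≤ p)
    (hΩ : ∀ x ∈ Ω, (fun n => x (n + 1)) ∈ Ω) {B : ℝ} (hB : 9 / 5 ≤ B) :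
    ∃ K, ∀ n, |Real.log (pattCount (treeBall2 (n + 1)) (treeAxialMulSub2 p Ω X)) -
        2 * Real.log (pattCount (treeBall2 n) (treeAxialMulSub2 p Ω X))| ≤ K * B ^ n := by
  by_cases hY : (treeAxialSub2 Ω X).Nonempty
  swap
  · have hZ : treeAxialMulSub2 p Ω X = ∅ := Set.eq_empty_of_forall_notMem fun x hx =>
      hY ⟨_, (mem_treeAxialMulSub2_iff hp hΩ x).1 hx _ (isRoot_nil_one hp)⟩
    exact ⟨0, fun n => by simp [pattCount, hZ]⟩
  set c := 130 * Real.log (Fintype.card A)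
  set K := B ^ 2 / (B - 1)
  refine ⟨c * (K * B + 1 + K), fun n => ?_⟩
  rw [log_pattCount_succ_sub_two_mul hp hΩ hY n]
  set E₁ := Real.log (rayRootCount (treeAxialSub2 Ω X) p (n + 1))
  set F := Real.log (pattCount (costBall p 1 n) (treeAxialSub2 Ω X))
  set E₀ := Real.log (rayRootCount (treeAxialSub2 Ω X) p n)
  have hE₁ : E₁ ≤ c * K * B ^ (n + 1) := log_rayRootCount_le hp hB hY (n + 1)
  have hF : F ≤ c * B ^ n := log_pattCount_costBall_le hp hB _ one_pos n
  have hE₀ : E₀ ≤ c * K * B ^ n := log_rayRootCount_le hp hB hY n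
  have hsum : E₁ + F + E₀ ≤ c * (K * B + 1 + K) * B ^ n := by
    calc _ ≤ c * K * B ^ (n + 1) + c * B ^ n + c * K * B ^ n := by linarith
      _ = _ := by ring
  have := Real.log_natCast_nonneg (rayRootCount (treeAxialSub2 Ω X) p (n + 1))
  have := Real.log_natCast_nonneg (pattCount (costBall p 1 n) (treeAxialSub2 Ω X))
  have := Real.log_natCast_nonneg (rayRootCount (treeAxialSub2 Ω X) p n)
  rw [abs_le]
  constructor <;> linarith

end Defect

theorem exists_abs_log_pattCount_sub_le {A : Type*} [Fintype A] {p : ℕ} (hp : 2 ≤ p)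
    {Ω X : Set (ℕ → A)} (hΩ : ∀ x ∈ Ω, (fun n => x (n + 1)) ∈ Ω) {h B : ℝ} (hB : 9 / 5 ≤ B)
    (hB2 : B < 2)
    (hlim : Tendsto (fun n : ℕ => Real.log (pattCount (treeBall2 n) (treeAxialMulSub2 p Ω X)) /
      ((2 : ℝ) ^ (n + 1) - 1)) atTop (nhds h)) :
    ∃ C, 0 < C ∧ ∀ n : ℕ, |Real.log (pattCount (treeBall2 n) (treeAxialMulSub2 p Ω X)) -
      ((2 : ℝ) ^ (n + 1) - 1) * h| ≤ C * B ^ n :=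
  have ⟨_, hK⟩ := exists_abs_log_pattCount_succ_sub_two_mul_le (X := X) hp hΩ hB
  exists_abs_sub_le_of_abs_succ_sub_two_mul_le (by linarith) hB2 hK hlim

end TreeAxialMulSub

lemma min_abs_root_bounds {x0 : ℝ} (hroot : x0 ^ 3 - 2 * x0 ^ 2 - x0 + 1 = 0)
    (hmin : ∀ y : ℝ, y ^ 3 - 2 * y ^ 2 - y + 1 = 0 → |x0| ≤ |y|) : 1 / 2 < x0 ∧ x0 ≤ 5 / 9 := by
  obtain ⟨y, ⟨hy₁, hy₂⟩, hy⟩ : ∃ y ∈ Set.Icc (1 / 2 : ℝ) (5 / 9), y ^ 3 - 2 * y ^ 2 - y + 1 = 0 :=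
    intermediate_value_Icc' (by norm_num) (by fun_prop) ⟨by norm_num, by norm_num⟩
  have hy' : |y| ≤ 5 / 9 := by rwa [abs_of_pos (by linarith)]
  obtain ⟨hx₁, hx₂⟩ := abs_le.1 ((hmin y hy).trans hy')
  refine ⟨?_, hx₂⟩
  by_contra! hx
  -- on `[-5/9, 1/2]` the cubic is `(1/2 - x)(7/4 + 3x/2 - x²) + 1/8 > 0`
  have h₁ : 0 ≤ 1 / 2 - x0 := by linarith
  have h₂ : 0 ≤ x0 + 5 / 9 := by linarith
  nlinarith [mul_nonneg (mul_nonneg h₁ h₁) h₂, mul_nonneg h₁ h₂]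

theorem surfaceEntropy_treeAxialProd_mulSubshift_subshift_general
    {A : Type*} [Fintype A] [TopologicalSpace A]
    (p : ℕ) (hp : 2 ≤ p)
    (Ω X : Set (ℕ → A)) (hΩ : IsSubshift Ω)
    (x0 : ℝ)
    (hroot : x0 ^ 3 - 2 * x0 ^ 2 - x0 + 1 = 0)
    (hmin : ∀ y : ℝ, y ^ 3 - 2 * y ^ 2 - y + 1 = 0 → |x0| ≤ |y|)
    (hT : ℝ)
    (hhT : Tendsto
      (fun n : ℕ =>
        Real.log (pattCount (treeBall2 n) (treeAxialMulSub2 p Ω X)) /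
          ((2 : ℝ) ^ (n + 1) - 1))
      atTop (nhds hT)) :
    ∃ C : ℝ, 0 < C ∧ ∀ n : ℕ,
      |Real.log (pattCount (treeBall2 n) (treeAxialMulSub2 p Ω X)) -
          ((2 : ℝ) ^ (n + 1) - 1) * hT| ≤ C * (1 / |x0|) ^ n := by
  obtain ⟨hx₁, hx₂⟩ := min_abs_root_bounds hroot hmin
  rw [abs_of_pos (by linarith)]
  refine TreeAxialMulSub.exists_abs_log_pattCount_sub_le hp hΩ.2.2 ?_ ?_ hhT
  · rw [le_div_iff₀ (by linarith)]
    linarith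
  · rw [div_lt_iff₀ (by linarith)]
    linarith

/-- Theorem 4.1(4): the deviation of `log|P(Δ_n, X_Ω^p × X)|` from `|Δ_n|` times the
tree entropy `h^T` is `O(B^n)`, where `B = 1/|x0|` and `x0` is the root of
`x³ − 2x² − x + 1` of smallest absolute value. -/
theorem surfaceEntropy_treeAxialProd_mulSubshift_subshift
    {A : Type*} [Fintype A] [TopologicalSpace A] [DiscreteTopology A]
    (p : ℕ) (hp : 2 ≤ p)
    (Ω X : Set (ℕ → A)) (hΩ : IsSubshift Ω) (hX : IsSubshift X)
    (x0 : ℝ)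
    (hroot : x0 ^ 3 - 2 * x0 ^ 2 - x0 + 1 = 0)
    (hmin : ∀ y : ℝ, y ^ 3 - 2 * y ^ 2 - y + 1 = 0 → |x0| ≤ |y|)
    (hT : ℝ)
    (hhT : Tendsto
      (fun n : ℕ =>
        Real.log (pattCount (treeBall2 n) (treeAxialMulSub2 p Ω X)) /
          ((2 : ℝ) ^ (n + 1) - 1))
      atTop (nhds hT)) :
    ∃ C : ℝ, 0 < C ∧ ∀ n : ℕ,
      |Real.log (pattCount (treeBall2 n) (treeAxialMulSub2 p Ω X)) -
          ((2 : ℝ) ^ (n + 1) - 1) * hT| ≤ C * (1 / |x0|) ^ n :=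
  surfaceEntropy_treeAxialProd_mulSubshift_subshift_general p hp Ω X hΩ x0 hroot hmin hT hhT
end
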